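/- arXiv:2307.14496 — 7 statements merged into one kernel-verified Lean document; each statement's English description precedes it below -/
import Mathlib

section
/- Let $A$ and $B$ be real symmetric $n\times n$ matrices. Then for all $1\le i\le n$, the $i$-th smallest eigenvalue of $A+B$ is at least the $i$-th smallest eigenvalue of $A$ plus the smallest eigenvalue of $B$. -/
/-!
A Courant–Fischer dimension count. The eigenvectors of `A` with eigenvalue at least `α i` span a
subspace of dimension at least `n - i`, and those of `A + B` with eigenvalue at most `γ i` span
one of dimension at least `i + 1`, so the two subspaces share a vector `x ≠ 0`. Expanding the
quadratic forms in the eigenbases gives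
`(α i + β 0) ‖x‖² ≤ ⟪A x, x⟫ + ⟪B x, x⟫ = ⟪(A + B) x, x⟫ ≤ γ i ‖x‖²`.
-/

open Matrix Polynomial Finset
open scoped RealInnerProductSpace

theorem Finset.card_filter_eq_of_map_univ_val_eq {ι α : Type*} [Fintype ι] {f g : ι → α}
    (h : univ.val.map f = univ.val.map g) (p : α → Prop) [DecidablePred p] :
    #{j | p (f j)} = #{j | p (g j)} := by
  have := congrArg (Multiset.countP p) h
  rwa [Multiset.countP_map, Multiset.countP_map] at this

theorem Monotone.sub_le_card_filter_le {α : Type*} [LinearOrder α] {n : ℕ} {f : Fin n → α}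
    (hf : Monotone f) (i : Fin n) : n - i ≤ #{j | f i ≤ f j} :=
  Fin.card_Ici i ▸ card_le_card fun _ hj => mem_filter.mpr ⟨mem_univ _, hf (mem_Ici.mp hj)⟩

theorem Monotone.add_one_le_card_filter_le {α : Type*} [LinearOrder α] {n : ℕ}
    {f : Fin n → α} (hf : Monotone f) (i : Fin n) : i + 1 ≤ #{j | f j ≤ f i} :=
  Fin.card_Iic i ▸ card_le_card fun _ hj => mem_filter.mpr ⟨mem_univ _, hf (mem_Iic.mp hj)⟩

section Eigenbasis

variable {ι E : Type*} [Fintype ι] [NormedAddCommGroup E] [InnerProductSpace ℝ E]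

theorem OrthonormalBasis.inner_eq_zero_of_mem_span_image (b : OrthonormalBasis ι ℝ E)
    {S : Set ι} {x : E} (hx : x ∈ Submodule.span ℝ (b '' S)) {j : ι} (hj : j ∉ S) :
    ⟪b j, x⟫ = 0 := by
  have : Submodule.span ℝ (b '' S) ≤ LinearMap.ker (innerₛₗ ℝ (b j)) := by
    rw [Submodule.span_le]
    rintro _ ⟨k, hk, rfl⟩
    exact b.orthonormal.2 (ne_of_mem_of_not_mem hk hj).symm
  exact this hx

theorem OrthonormalBasis.finrank_span_image (b : OrthonormalBasis ι ℝ E) (S : Finset ι) :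
    Module.finrank ℝ (Submodule.span ℝ (b '' S)) = #S := by
  rw [Set.image_eq_range]
  exact (finrank_span_eq_card
    (b.orthonormal.linearIndependent.comp _ Subtype.val_injective)).trans (by simp)

variable {T : E →ₗ[ℝ] E} {b : OrthonormalBasis ι ℝ E} {μ : ι → ℝ}

theorem inner_map_self_eq_sum_eigenvalues (hT : ∀ j, T (b j) = μ j • b j) (x : E) :
    ⟪T x, x⟫ = ∑ j, μ j * ⟪b j, x⟫ ^ 2 := by
  nth_rw 1 [← b.sum_repr' x]
  simp only [map_sum, map_smul, hT, sum_inner, inner_smul_left, RCLike.conj_to_real]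
  exact Finset.sum_congr rfl fun j _ => by ring

theorem mul_norm_sq_le_inner_map_self (hT : ∀ j, T (b j) = μ j • b j) {c : ℝ} {x : E}
    (hx : ∀ j, ⟪b j, x⟫ ≠ 0 → c ≤ μ j) : c * ‖x‖ ^ 2 ≤ ⟪T x, x⟫ := by
  rw [inner_map_self_eq_sum_eigenvalues hT, ← b.sum_sq_inner_right, Finset.mul_sum]
  refine Finset.sum_le_sum fun j _ => ?_
  by_cases h : ⟪b j, x⟫ = 0
  · simp [h]
  · exact mul_le_mul_of_nonneg_right (hx j h) (sq_nonneg _)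

theorem exists_submodule_mul_norm_sq_le_inner (hT : ∀ j, T (b j) = μ j • b j) (c : ℝ) :
    ∃ U : Submodule ℝ E, Module.finrank ℝ U = #{j | c ≤ μ j} ∧
      ∀ x ∈ U, c * ‖x‖ ^ 2 ≤ ⟪T x, x⟫ := by
  refine ⟨Submodule.span ℝ (b '' ↑({j | c ≤ μ j} : Finset ι)), b.finrank_span_image _,
    fun x hx => mul_norm_sq_le_inner_map_self hT fun j hj => ?_⟩
  by_contra hμ
  exact hj (b.inner_eq_zero_of_mem_span_image hx (by simpa using hμ))

theorem exists_submodule_inner_le_mul_norm_sq (hT : ∀ j, T (b j) = μ j • b j) (c : ℝ) :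
    ∃ U : Submodule ℝ E, Module.finrank ℝ U = #{j | μ j ≤ c} ∧
      ∀ x ∈ U, ⟪T x, x⟫ ≤ c * ‖x‖ ^ 2 := by
  have hnegT : ∀ j, (-T) (b j) = (-μ) j • b j := fun j => by simp [hT]
  obtain ⟨U, hU, hUT⟩ := exists_submodule_mul_norm_sq_le_inner hnegT (-c)
  refine ⟨U, by simpa using hU, fun x hx => ?_⟩
  have := hUT x hx
  simp only [LinearMap.neg_apply, inner_neg_left] at this
  linarith

end Eigenbasis

namespace Matrix.IsHermitian

variable {ι : Type*} [Fintype ι] [DecidableEq ι] {A : Matrix ι ι ℝ} (hA : A.IsHermitian)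
include hA

theorem toEuclideanLin_eigenvectorBasis (j : ι) :
    toEuclideanLin A (hA.eigenvectorBasis j) = hA.eigenvalues j • hA.eigenvectorBasis j := by
  ext k
  simpa [toLpLin_apply] using congrFun (hA.mulVec_eigenvectorBasis j) k

theorem map_eigenvalues_eq_of_charpoly_eq {α : ι → ℝ}
    (hc : A.charpoly = ∏ i, (X - C (α i))) :
    univ.val.map hA.eigenvalues = univ.val.map α := by
  have := hA.roots_charpoly_eq_eigenvalues
  rw [hc, roots_prod _ _ (prod_ne_zero_iff.mpr fun i _ => X_sub_C_ne_zero (α i))] at this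
  simpa using this.symm

end Matrix.IsHermitian

/-- **Weyl's inequality.** Let `A`, `B` be real symmetric `n × n` matrices,
and let `α`, `β`, `γ` be nondecreasing enumerations of the eigenvalues (with multiplicity)
of `A`, `B`, `A + B` respectively. Then for every `i`, the `i`-th smallest eigenvalue of
`A + B` is at least the `i`-th smallest eigenvalue of `A` plus the smallest eigenvalue of
`B`: `γ i ≥ α i + β 0`. -/
theorem weyl_inequality {n : ℕ} (hn : 0 < n) (A B : Matrix (Fin n) (Fin n) ℝ)
    (hA : A.IsSymm) (hB : B.IsSymm)
    (α β γ : Fin n → ℝ) (hα : Monotone α) (hβ : Monotone β) (hγ : Monotone γ)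
    (hcA : A.charpoly = ∏ i, (X - C (α i)))
    (hcB : B.charpoly = ∏ i, (X - C (β i)))
    (hcAB : (A + B).charpoly = ∏ i, (X - C (γ i))) :
    ∀ i : Fin n, α i + β ⟨0, hn⟩ ≤ γ i := by
  intro i
  by_contra! hlt
  have hA' : A.IsHermitian := isHermitian_iff_isSymm.mpr hA
  have hB' : B.IsHermitian := isHermitian_iff_isSymm.mpr hB
  have hAB' : (A + B).IsHermitian := hA'.add hB'
  obtain ⟨U, hU, hUA⟩ :=
    exists_submodule_mul_norm_sq_le_inner hA'.toEuclideanLin_eigenvectorBasis (α i)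
  obtain ⟨V, hV, hVAB⟩ :=
    exists_submodule_inner_le_mul_norm_sq hAB'.toEuclideanLin_eigenvectorBasis (γ i)
  have hUV : ¬Disjoint U V := fun h => by
    have hdim := Submodule.finrank_add_finrank_le_of_disjoint h
    rw [hU, hV, finrank_euclideanSpace_fin,
      card_filter_eq_of_map_univ_val_eq (hA'.map_eigenvalues_eq_of_charpoly_eq hcA) (α i ≤ ·),
      card_filter_eq_of_map_univ_val_eq (hAB'.map_eigenvalues_eq_of_charpoly_eq hcAB) (· ≤ γ i)]
      at hdim
    have hcardA := hα.sub_le_card_filter_le i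
    have hcardAB := hγ.add_one_le_card_filter_le i
    omega
  obtain ⟨x, hxU, hxV, hx0⟩ : ∃ x ∈ U, x ∈ V ∧ x ≠ 0 := by
    simpa [Submodule.disjoint_def] using hUV
  have hBx : β ⟨0, hn⟩ * ‖x‖ ^ 2 ≤ ⟪toEuclideanLin B x, x⟫ := by
    refine mul_norm_sq_le_inner_map_self hB'.toEuclideanLin_eigenvectorBasis fun j _ => ?_
    obtain ⟨k, -, hk⟩ := Multiset.mem_map.mp
      (hB'.map_eigenvalues_eq_of_charpoly_eq hcB ▸ Multiset.mem_map_of_mem _ (mem_univ_val j))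
    exact hk ▸ hβ (Nat.zero_le k)
  have hxAB := hVAB x hxV
  rw [map_add, LinearMap.add_apply, inner_add_left] at hxAB
  have hlt' := mul_lt_mul_of_pos_right hlt (by positivity : 0 < ‖x‖ ^ 2)
  linarith [hUA x hxU]
end

section
/- Let $G=(V,E)$ be a finite graph with Laplacian $L(G)$ and let $\eta(I(G))$ denote the homological connectivity of the independence complex, i.e., the maximal $k$ such that $\tilde H_i(I(G);\mathbb{R})=0$ for all $i\le k-2$. Then $\eta(I(G))\ge |V|/\lambda_{\max}(L(G))$, where $\lambda_{\max}(L(G))$ is the largest Laplacian eigenvalue of $G$. -/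
open Matrix Polynomial

variable {V : Type*} [Fintype V] [DecidableEq V] [LinearOrder V]

/-- Faces of the independence complex of `G` of cardinality `k`. -/
abbrev SimpleGraph.indepFace (G : SimpleGraph V) [DecidableRel G.Adj] (k : ℕ) :=
  {σ : Finset V // σ.card = k ∧ ∀ u ∈ σ, ∀ v ∈ σ, ¬ G.Adj u v}

/-- The simplicial boundary matrix of the independence complex. -/
noncomputable def SimpleGraph.indepBoundary (G : SimpleGraph V) [DecidableRel G.Adj] (k : ℕ) :
    Matrix (G.indepFace k) (G.indepFace (k+1)) ℝ :=
  Matrix.of fun σ τ =>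
    if σ.1 ⊆ τ.1 then ∑ v ∈ τ.1 \ σ.1, (-1 : ℝ) ^ ((τ.1.filter (· < v)).card) else 0

/-- `dim H̃_k(I(G); ℝ)`. -/
noncomputable def SimpleGraph.indepHomologyDim (G : SimpleGraph V) [DecidableRel G.Adj]
    (k : ℕ) : ℕ :=
  Module.finrank ℝ (LinearMap.ker (G.indepBoundary k).mulVecLin) -
    Module.finrank ℝ (LinearMap.range (G.indepBoundary (k+1)).mulVecLin)

/-!
Following Aharoni, Berger and Meshulam, extend a `k`-chain `h` of `I(G)` by zero to a function `F`
on all finsets of vertices. Then `‖∂h‖²` and `‖∂ᵀh‖²` become sums over the full simplex on `V`.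
Their diagonal parts weigh each face `r` by `|r|` and by the number of vertices extending `r` to a
larger independent set; their cross terms, indexed by a face `σ` and vertices `u ≠ v` outside it,
cancel except when `u ~ v`, leaving a sum of adjacency quadratic forms
`gᵀ A g = gᵀ D g - gᵀ L g ≥ gᵀ D g - λ ‖g‖²`. As every vertex lies in `r`, is adjacent to `r`, or
extends `r`, this gives `‖∂h‖² + ‖∂ᵀh‖² ≥ (n - (k + 1) λ) ‖h‖²`. So for `(k + 1) λ < n` the kernels
of `∂` and `∂ᵀ` meet trivially, whence `dim ker ∂_k ≤ rank ∂_{k+1}` and `H̃_k(I(G)) = 0`.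
-/

open Finset

namespace Finset

section OrderSign

variable {α : Type*} [LinearOrder α]

/-- The incidence sign `[s : s \ {v}]` used in `SimpleGraph.indepBoundary`. -/
def orderSign (s : Finset α) (v : α) : ℝ :=
  (-1) ^ #{w ∈ s | w < v}

theorem orderSign_sq (s : Finset α) (v : α) : s.orderSign v ^ 2 = 1 := by
  rw [orderSign, ← pow_mul, pow_mul', neg_one_sq, one_pow]

variable [DecidableEq α]

theorem orderSign_insert_self (s : Finset α) (v : α) :
    (insert v s).orderSign v = s.orderSign v := by
  simp [orderSign, filter_insert]

theorem orderSign_insert_of_notMem {s : Finset α} {u : α} (hu : u ∉ s) (v : α) :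
    (insert u s).orderSign v = (if u < v then -1 else 1) * s.orderSign v := by
  unfold orderSign
  rw [filter_insert]
  split_ifs
  · rw [card_insert_of_notMem fun h => hu (mem_filter.mp h).1, pow_succ, mul_comm]
  · rw [one_mul]

theorem orderSign_insert_insert {s : Finset α} {u v : α} (huv : u ≠ v) (hu : u ∉ s)
    (hv : v ∉ s) :
    (insert u (insert v s)).orderSign u * (insert u (insert v s)).orderSign v
      = -((insert u s).orderSign u * (insert v s).orderSign v) := by
  have hu' : u ∉ insert v s := by simp [huv, hu]
  rw [orderSign_insert_self, orderSign_insert_of_notMem hu' v, orderSign_insert_of_notMem hv u,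
    orderSign_insert_self, orderSign_insert_self]
  rcases huv.lt_or_gt with h | h <;> simp [h, h.not_gt]

end OrderSign

theorem insert_eq_iff_of_card_eq {α : Type*} [DecidableEq α] {σ X : Finset α} {v : α}
    (hv : v ∉ σ) (hX : #X = #σ + 1) : insert v σ = X ↔ v ∈ X ∧ σ ⊆ X := by
  refine ⟨fun h => h ▸ ⟨mem_insert_self _ _, subset_insert _ _⟩, fun h => ?_⟩
  exact eq_of_subset_of_card_le (insert_subset h.1 h.2) (by rw [hX, card_insert_of_notMem hv])

theorem sum_sum_mem_eq_sum_sum_compl {α β : Type*} [Fintype α] [DecidableEq α]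
    [AddCommMonoid β] (f : Finset α → α → β) :
    ∑ r, ∑ u ∈ r, f r u = ∑ s, ∑ u ∈ sᶜ, f (insert u s) u := by
  calc ∑ r, ∑ u ∈ r, f r u = ∑ u, ∑ r with u ∈ r, f r u := sum_comm' (by simp)
    _ = ∑ u, ∑ s with u ∉ s, f (insert u s) u := sum_congr rfl fun u _ =>
        sum_nbij' (fun r => r.erase u) (insert u) (by simp) (by simp)
          (fun r hr => insert_erase (mem_filter.mp hr).2)
          (fun s hs => erase_insert (mem_filter.mp hs).2)
          (fun r hr => by rw [insert_erase (mem_filter.mp hr).2])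
    _ = ∑ s, ∑ u ∈ sᶜ, f (insert u s) u := (sum_comm' (by simp)).symm

theorem sq_sum_eq_sum_sq_add_sum_sum_erase {ι : Type*} [DecidableEq ι] (s : Finset ι)
    (a : ι → ℝ) :
    (∑ i ∈ s, a i) ^ 2 = ∑ i ∈ s, a i ^ 2 + ∑ i ∈ s, ∑ j ∈ s.erase i, a i * a j := by
  rw [sq, sum_mul_sum, ← sum_add_distrib]
  exact sum_congr rfl fun i hi => by rw [← add_sum_erase _ _ hi, sq]

end Finset

namespace Matrix

theorem IsHermitian.dotProduct_mulVec_le {n : Type*} [Fintype n] [DecidableEq n]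
    {M : Matrix n n ℝ} (hM : M.IsHermitian) {c : ℝ} (hc : ∀ μ ∈ spectrum ℝ M, μ ≤ c)
    (x : n → ℝ) : x ⬝ᵥ M *ᵥ x ≤ c * (x ⬝ᵥ x) := by
  have hpsd : (algebraMap ℝ (Matrix n n ℝ) c - M).PosSemidef := by
    refine posSemidef_iff_isHermitian_and_spectrum_nonneg.mpr
      ⟨IsHermitian.sub (by rw [algebraMap_eq_diagonal]; exact isHermitian_diagonal _) hM,
        fun μ hμ => ?_⟩
    rw [← spectrum.singleton_sub_eq] at hμ
    obtain ⟨_, rfl, ν, hν, rfl⟩ := hμ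
    exact sub_nonneg.mpr (hc ν hν)
  have := hpsd.dotProduct_mulVec_nonneg x
  rw [star_trivial, sub_mulVec, dotProduct_sub, Algebra.algebraMap_eq_smul_one, smul_mulVec,
    one_mulVec, dotProduct_smul, smul_eq_mul] at this
  linarith

theorem finrank_ker_le_finrank_range {m p q : Type*} [Fintype m] [Fintype p] [Fintype q]
    [DecidableEq p] [DecidableEq q] (A : Matrix m p ℝ) (C : Matrix p q ℝ)
    (h : Disjoint (LinearMap.ker A.mulVecLin) (LinearMap.ker Cᵀ.mulVecLin)) :
    Module.finrank ℝ (LinearMap.ker A.mulVecLin)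
      ≤ Module.finrank ℝ (LinearMap.range C.mulVecLin) := by
  have hdisj := Submodule.finrank_add_finrank_le_of_disjoint h
  have hrank := LinearMap.finrank_range_add_finrank_ker Cᵀ.mulVecLin
  have htr : Cᵀ.rank = C.rank := C.rank_transpose
  rw [rank, rank] at htr
  omega

end Matrix

namespace SimpleGraph

variable {α : Type*} {G : SimpleGraph α}

theorem isIndepSet_iff_forall_not_adj {s : Set α} :
    G.IsIndepSet s ↔ ∀ u ∈ s, ∀ v ∈ s, ¬G.Adj u v :=
  ⟨fun h _ hu _ hv huv => h hu hv (G.ne_of_adj huv) huv, fun h u hu v hv _ => h u hu v hv⟩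

theorem isIndepSet_insert {a : α} {s : Set α} :
    G.IsIndepSet (insert a s) ↔ G.IsIndepSet s ∧ ∀ b ∈ s, ¬G.Adj a b := by
  simp only [isIndepSet_iff_forall_not_adj, Set.mem_insert_iff, forall_eq_or_imp,
    G.irrefl, not_false_eq_true, true_and]
  exact ⟨fun h => ⟨fun u hu v hv => h.2 u hu |>.2 v hv, h.1⟩,
    fun h => ⟨h.2, fun u hu => ⟨fun hua => h.2 u hu hua.symm, h.1 u hu⟩⟩⟩

theorem isIndepSet_insert_insert_iff {s : Set α} {u v : α} (hu : G.IsIndepSet (insert u s))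
    (hv : G.IsIndepSet (insert v s)) : G.IsIndepSet (insert v (insert u s)) ↔ ¬G.Adj u v := by
  rw [isIndepSet_insert, Set.forall_mem_insert]
  exact ⟨fun h huv => h.2.1 huv.symm, fun h => ⟨hu, fun hvu => h hvu.symm,
    (isIndepSet_insert.mp hv).2⟩⟩

variable [Fintype α] [DecidableEq α] [DecidableRel G.Adj]

theorem card_le_card_extensions_add {r : Finset α} (hr : G.IsIndepSet (r : Set α)) :
    Fintype.card α ≤ #{v ∈ rᶜ | G.IsIndepSet ↑(insert v r)} + #r + ∑ u ∈ r, G.degree u := by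
  have hcover : (univ : Finset α)
      ⊆ {v ∈ rᶜ | G.IsIndepSet ↑(insert v r)} ∪ r ∪ r.biUnion fun u => G.neighborFinset u := by
    intro v _
    by_cases hvr : v ∈ r
    · simp [hvr]
    by_cases hadj : ∃ u ∈ r, G.Adj u v
    · obtain ⟨u, hu, huv⟩ := hadj
      exact mem_union_right _ (mem_biUnion.mpr ⟨u, hu, (G.mem_neighborFinset u v).mpr huv⟩)
    simp only [not_exists, not_and] at hadj
    refine mem_union_left _ (mem_union_left _ (mem_filter.mpr ⟨mem_compl.mpr hvr, ?_⟩))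
    rw [coe_insert, isIndepSet_insert]
    exact ⟨hr, fun b hb hvb => hadj b hb hvb.symm⟩
  calc Fintype.card α = #(univ : Finset α) := card_univ.symm
    _ ≤ _ := card_le_card hcover
    _ ≤ _ := (card_union_le _ _).trans (add_le_add_left (card_union_le _ _) _)
    _ ≤ _ := add_le_add_right card_biUnion_le _

theorem sum_degree_mul_sq_sub_le_dotProduct_adjMatrix_mulVec {lam : ℝ}
    (hlam : ∀ μ ∈ spectrum ℝ (G.lapMatrix ℝ), μ ≤ lam) (x : α → ℝ) :
    ∑ v, G.degree v * x v ^ 2 - lam * ∑ v, x v ^ 2 ≤ x ⬝ᵥ G.adjMatrix ℝ *ᵥ x := by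
  have hlap := (G.isHermitian_lapMatrix ℝ).dotProduct_mulVec_le hlam x
  rw [lapMatrix, sub_mulVec, dotProduct_sub, dotProduct_mulVec_degMatrix] at hlap
  simp only [dotProduct, ← sq, mul_assoc] at hlap ⊢
  linarith

theorem sum_isIndepSet_sum_sq_erase (F : Finset α → ℝ) :
    ∑ τ with G.IsIndepSet ↑(τ : Finset α), ∑ v ∈ τ, F (τ.erase v) ^ 2
      = ∑ r : Finset α, #{v ∈ rᶜ | G.IsIndepSet ↑(insert v r)} * F r ^ 2 := by
  calc ∑ τ with G.IsIndepSet ↑(τ : Finset α), ∑ v ∈ τ, F (τ.erase v) ^ 2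
        = ∑ τ, ∑ v ∈ τ, if G.IsIndepSet (↑τ : Set α) then F (τ.erase v) ^ 2 else 0 := by
        simp only [sum_filter, sum_ite_irrel, sum_const_zero]
    _ = ∑ r, ∑ v ∈ rᶜ, if G.IsIndepSet ↑(insert v r) then F r ^ 2 else 0 := by
        rw [sum_sum_mem_eq_sum_sum_compl]
        exact sum_congr rfl fun r _ => sum_congr rfl fun v hv => by
          rw [erase_insert (mem_compl.mp hv)]
    _ = _ := by simp only [← sum_filter, sum_const, nsmul_eq_mul]

end SimpleGraph

section SimplexChains

variable {α : Type*} [DecidableEq α] [LinearOrder α] (F : Finset α → ℝ)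

/-- The summands of the boundary `∂F(σ) = ∑ v, boundaryTerm F σ v` of a chain `F` of the full
simplex. -/
noncomputable def boundaryTerm (σ : Finset α) (v : α) : ℝ :=
  if v ∈ σ then 0 else (insert v σ).orderSign v * F (insert v σ)

noncomputable def coboundary (τ : Finset α) : ℝ :=
  ∑ v ∈ τ, τ.orderSign v * F (τ.erase v)

theorem boundaryTerm_of_mem {σ : Finset α} {v : α} (hv : v ∈ σ) : boundaryTerm F σ v = 0 :=
  if_pos hv

theorem coboundary_cross_term_eq_neg_boundaryTerm_mul {σ : Finset α} {u v : α} (hu : u ∉ σ)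
    (hv : v ∉ insert u σ) :
    (insert v (insert u σ)).orderSign v * F (insert u σ)
        * ((insert v (insert u σ)).orderSign u * F ((insert v (insert u σ)).erase u))
      = -(boundaryTerm F σ u * boundaryTerm F σ v) := by
  rw [mem_insert, not_or] at hv
  rw [erase_insert_of_ne hv.1, erase_insert hu, boundaryTerm, if_neg hu, boundaryTerm,
    if_neg hv.2]
  linear_combination (F (insert u σ) * F (insert v σ)) * orderSign_insert_insert hv.1 hv.2 hu

theorem SimpleGraph.isIndepSet_of_boundaryTerm_ne_zero {G : SimpleGraph α}
    (hF : ∀ X, F X ≠ 0 → G.IsIndepSet (X : Set α)) {σ : Finset α} {u : α}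
    (hu : boundaryTerm F σ u ≠ 0) : G.IsIndepSet ↑(insert u σ) := by
  unfold boundaryTerm at hu
  split_ifs at hu
  · exact absurd rfl hu
  · exact hF _ (right_ne_zero_of_mul hu)

variable [Fintype α]

/-- The entry of `SimpleGraph.indepBoundary` at `(σ, X)`, written as a sum over the vertices
that extend `σ`. -/
theorem ite_subset_sum_sdiff_orderSign_eq {σ X : Finset α} (hX : #X = #σ + 1) :
    (if σ ⊆ X then ∑ v ∈ X \ σ, X.orderSign v else 0)
      = ∑ v ∈ σᶜ, if insert v σ = X then X.orderSign v else 0 := by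
  split_ifs with hσX
  · rw [← sum_filter]
    refine sum_congr (ext fun v => ?_) fun _ _ => rfl
    simp only [mem_sdiff, mem_filter, mem_compl]
    constructor
    · rintro ⟨hvX, hvσ⟩
      exact ⟨hvσ, (insert_eq_iff_of_card_eq hvσ hX).mpr ⟨hvX, hσX⟩⟩
    · rintro ⟨hvσ, h⟩
      exact ⟨((insert_eq_iff_of_card_eq hvσ hX).mp h).1, hvσ⟩
  · exact (sum_eq_zero fun v _ =>
      if_neg fun h : insert v σ = X => hσX (h ▸ subset_insert v σ)).symm

theorem sum_apply_boundaryTerm (σ : Finset α) (Φ : α → ℝ → ℝ) (hΦ : ∀ v, Φ v 0 = 0) :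
    ∑ v, Φ v (boundaryTerm F σ v)
      = ∑ v ∈ σᶜ, Φ v ((insert v σ).orderSign v * F (insert v σ)) := by
  rw [← sum_subset (subset_univ σᶜ) fun v _ hv => by
    rw [boundaryTerm_of_mem F (by simpa using hv), hΦ]]
  exact sum_congr rfl fun v hv => by rw [boundaryTerm, if_neg (mem_compl.mp hv)]

theorem sum_sum_mul_boundaryTerm_sq (w : α → ℝ) :
    ∑ σ, ∑ v, w v * boundaryTerm F σ v ^ 2 = ∑ r, (∑ u ∈ r, w u) * F r ^ 2 := by
  calc ∑ σ, ∑ v, w v * boundaryTerm F σ v ^ 2 = ∑ σ, ∑ v ∈ σᶜ, w v * F (insert v σ) ^ 2 :=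
        sum_congr rfl fun σ _ => by
          rw [sum_apply_boundaryTerm F σ (fun v t => w v * t ^ 2) (by simp)]
          simp only [mul_pow, orderSign_sq, one_mul]
    _ = ∑ r, ∑ u ∈ r, w u * F r ^ 2 :=
        (sum_sum_mem_eq_sum_sum_compl fun r u => w u * F r ^ 2).symm
    _ = ∑ r, (∑ u ∈ r, w u) * F r ^ 2 := sum_congr rfl fun r _ => (sum_mul _ _ _).symm

theorem sum_sum_boundaryTerm_sq :
    ∑ σ, ∑ v, boundaryTerm F σ v ^ 2 = ∑ r, (#r : ℝ) * F r ^ 2 := by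
  simpa using sum_sum_mul_boundaryTerm_sq F fun _ => 1

theorem sum_sq_sum_boundaryTerm :
    ∑ σ, (∑ v, boundaryTerm F σ v) ^ 2
      = ∑ r, #r * F r ^ 2
        + ∑ σ, ∑ u, ∑ v ∈ univ.erase u, boundaryTerm F σ u * boundaryTerm F σ v := by
  simp only [sq_sum_eq_sum_sq_add_sum_sum_erase, sum_add_distrib, sum_sum_boundaryTerm_sq]

variable (G : SimpleGraph α) [DecidableRel G.Adj]

/-- Reindexed along `(τ, v, u) ↦ (τ \ {u, v}, u, v)`; the sign flip is
`orderSign_insert_insert`. -/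
theorem sum_isIndepSet_sum_sum_erase :
    ∑ τ with G.IsIndepSet ↑(τ : Finset α), ∑ v ∈ τ, ∑ u ∈ τ.erase v,
        τ.orderSign v * F (τ.erase v) * (τ.orderSign u * F (τ.erase u))
      = -∑ σ : Finset α, ∑ u, ∑ v ∈ univ.erase u, if G.IsIndepSet ↑(insert v (insert u σ))
          then boundaryTerm F σ u * boundaryTerm F σ v else 0 := by
  set T : Finset α → α → α → ℝ := fun r u v => if G.IsIndepSet ↑(insert v r) then
    (insert v r).orderSign v * F r * ((insert v r).orderSign u * F ((insert v r).erase u))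
    else 0
  calc _ = ∑ τ, ∑ v ∈ τ, ∑ u ∈ τ.erase v, if G.IsIndepSet (↑τ : Set α) then
            τ.orderSign v * F (τ.erase v) * (τ.orderSign u * F (τ.erase u)) else 0 := by
        simp only [sum_filter, sum_ite_irrel, sum_const_zero]
    _ = ∑ r, ∑ v ∈ rᶜ, ∑ u ∈ r, T r u v := by
        rw [sum_sum_mem_eq_sum_sum_compl]
        exact sum_congr rfl fun r _ => sum_congr rfl fun v hv => by
          rw [erase_insert (mem_compl.mp hv)]
    _ = ∑ r, ∑ u ∈ r, ∑ v ∈ rᶜ, T r u v := sum_congr rfl fun r _ => sum_comm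
    _ = ∑ σ, ∑ u ∈ σᶜ, ∑ v ∈ (insert u σ)ᶜ, T (insert u σ) u v :=
        sum_sum_mem_eq_sum_sum_compl fun r u => ∑ v ∈ rᶜ, T r u v
    _ = ∑ σ, ∑ u ∈ σᶜ, ∑ v ∈ (insert u σ)ᶜ, -(if G.IsIndepSet ↑(insert v (insert u σ))
          then boundaryTerm F σ u * boundaryTerm F σ v else 0) :=
        sum_congr rfl fun σ _ => sum_congr rfl fun u hu => sum_congr rfl fun v hv => by
          simp only [T]
          split_ifs
          · exact coboundary_cross_term_eq_neg_boundaryTerm_mul F (mem_compl.mp hu)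
              (mem_compl.mp hv)
          · rw [neg_zero]
    _ = _ := by
        simp only [sum_neg_distrib]
        refine congrArg _ (sum_congr rfl fun σ _ => ?_)
        rw [← sum_subset (subset_univ σᶜ) fun u _ hu => sum_eq_zero fun v _ => by
          rw [boundaryTerm_of_mem F (by simpa using hu), zero_mul, ite_self]]
        refine sum_congr rfl fun u _ => sum_subset (fun v hv => ?_) fun v _ hv => ?_
        · simp only [mem_compl, mem_insert, not_or] at hv
          exact mem_erase.mpr ⟨hv.1, mem_univ v⟩
        · rw [boundaryTerm_of_mem F (v := v) (by simp_all), mul_zero, ite_self]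

theorem sum_isIndepSet_sq_coboundary :
    ∑ τ with G.IsIndepSet ↑(τ : Finset α), coboundary F τ ^ 2
      = ∑ r : Finset α, #{v ∈ rᶜ | G.IsIndepSet ↑(insert v r)} * F r ^ 2
        - ∑ σ : Finset α, ∑ u, ∑ v ∈ univ.erase u, if G.IsIndepSet ↑(insert v (insert u σ))
          then boundaryTerm F σ u * boundaryTerm F σ v else 0 := by
  simp only [coboundary, sq_sum_eq_sum_sq_add_sum_sum_erase, sum_add_distrib, mul_pow,
    orderSign_sq, one_mul]
  rw [G.sum_isIndepSet_sum_sq_erase, sum_isIndepSet_sum_sum_erase, sub_eq_add_neg]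

theorem sum_sum_erase_sub_eq_dotProduct_adjMatrix_mulVec
    (hF : ∀ X, F X ≠ 0 → G.IsIndepSet (X : Set α)) (σ : Finset α) :
    ∑ u, ∑ v ∈ univ.erase u, (boundaryTerm F σ u * boundaryTerm F σ v
        - if G.IsIndepSet ↑(insert v (insert u σ))
          then boundaryTerm F σ u * boundaryTerm F σ v else 0)
      = boundaryTerm F σ ⬝ᵥ G.adjMatrix ℝ *ᵥ boundaryTerm F σ := by
  simp only [dotProduct, mulVec, mul_sum]
  refine sum_congr rfl fun u _ => ?_
  rw [← add_sum_erase _ _ (mem_univ u), SimpleGraph.adjMatrix_apply, if_neg (G.irrefl (v := u)),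
    zero_mul, mul_zero, zero_add]
  refine sum_congr rfl fun v _ => ?_
  by_cases hg : boundaryTerm F σ u * boundaryTerm F σ v = 0
  · rw [hg, ite_self, sub_zero, mul_left_comm, hg, mul_zero]
  have hiff : G.IsIndepSet ↑(insert v (insert u σ)) ↔ ¬G.Adj u v := by
    rw [coe_insert, coe_insert]
    exact SimpleGraph.isIndepSet_insert_insert_iff
      (by simpa using G.isIndepSet_of_boundaryTerm_ne_zero F hF (left_ne_zero_of_mul hg))
      (by simpa using G.isIndepSet_of_boundaryTerm_ne_zero F hF (right_ne_zero_of_mul hg))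
  rw [SimpleGraph.adjMatrix_apply]
  by_cases hadj : G.Adj u v
  · rw [if_neg fun h => hiff.mp h hadj, if_pos hadj]
    ring
  · rw [if_pos (hiff.mpr hadj), if_neg hadj]
    ring

theorem sum_mul_sq_le_sum_sq_coboundary_add_sum_sq_boundary {lam : ℝ}
    (hlam : ∀ μ ∈ spectrum ℝ (G.lapMatrix ℝ), μ ≤ lam)
    (hF : ∀ X, F X ≠ 0 → G.IsIndepSet (X : Set α)) :
    ∑ X, (Fintype.card α - lam * #X) * F X ^ 2
      ≤ ∑ τ with G.IsIndepSet ↑(τ : Finset α), coboundary F τ ^ 2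
        + ∑ σ, (∑ v, boundaryTerm F σ v) ^ 2 := by
  rw [sum_isIndepSet_sq_coboundary, sum_sq_sum_boundaryTerm]
  have hadj : ∑ σ : Finset α, ∑ u, ∑ v ∈ univ.erase u, boundaryTerm F σ u * boundaryTerm F σ v
      - ∑ σ : Finset α, ∑ u, ∑ v ∈ univ.erase u, (if G.IsIndepSet ↑(insert v (insert u σ))
          then boundaryTerm F σ u * boundaryTerm F σ v else 0)
      = ∑ σ, boundaryTerm F σ ⬝ᵥ G.adjMatrix ℝ *ᵥ boundaryTerm F σ := by
    simp only [← sum_sub_distrib]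
    exact sum_congr rfl fun σ _ => sum_sum_erase_sub_eq_dotProduct_adjMatrix_mulVec F G hF σ
  have hquad : ∑ r, (∑ u ∈ r, (G.degree u : ℝ)) * F r ^ 2 - lam * ∑ r, (#r : ℝ) * F r ^ 2
      ≤ ∑ σ, boundaryTerm F σ ⬝ᵥ G.adjMatrix ℝ *ᵥ boundaryTerm F σ := by
    rw [← sum_sum_mul_boundaryTerm_sq, ← sum_sum_boundaryTerm_sq, mul_sum, ← sum_sub_distrib]
    exact sum_le_sum fun σ _ => G.sum_degree_mul_sq_sub_le_dotProduct_adjMatrix_mulVec hlam _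
  have hcount : ∑ X, (Fintype.card α - lam * #X) * F X ^ 2
      ≤ ∑ X : Finset α, (#{v ∈ Xᶜ | G.IsIndepSet ↑(insert v X)} + #X
          + ∑ u ∈ X, (G.degree u : ℝ) - lam * #X) * F X ^ 2 := by
    refine sum_le_sum fun X _ => ?_
    by_cases hX : F X = 0
    · simp [hX]
    have := G.card_le_card_extensions_add (hF X hX)
    exact mul_le_mul_of_nonneg_right (sub_le_sub_right (by exact_mod_cast this) _) (sq_nonneg _)
  have hsplit : ∑ X : Finset α, (#{v ∈ Xᶜ | G.IsIndepSet ↑(insert v X)} + #X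
          + ∑ u ∈ X, (G.degree u : ℝ) - lam * #X) * F X ^ 2
      = ∑ X : Finset α, #{v ∈ Xᶜ | G.IsIndepSet ↑(insert v X)} * F X ^ 2
        + ∑ X, (#X : ℝ) * F X ^ 2 + ∑ X, (∑ u ∈ X, (G.degree u : ℝ)) * F X ^ 2
        - lam * ∑ X, (#X : ℝ) * F X ^ 2 := by
    simp only [add_mul, sub_mul, sum_add_distrib, sum_sub_distrib, mul_assoc, ← mul_sum]
  linarith

end SimplexChains

namespace SimpleGraph

section ExtendByZero

variable {α : Type*} {G : SimpleGraph α} [DecidableRel G.Adj] {k : ℕ}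

variable (G) in
noncomputable def extendByZero (h : G.indepFace k → ℝ) (X : Finset α) : ℝ :=
  if hX : X.card = k ∧ ∀ u ∈ X, ∀ v ∈ X, ¬G.Adj u v then h ⟨X, hX⟩ else 0

theorem card_eq_and_isIndepSet_of_extendByZero_ne_zero {h : G.indepFace k → ℝ}
    {X : Finset α} (hX : G.extendByZero h X ≠ 0) : #X = k ∧ G.IsIndepSet (X : Set α) := by
  unfold extendByZero at hX
  split_ifs at hX with hface
  · exact ⟨hface.1, isIndepSet_iff_forall_not_adj.mpr hface.2⟩
  · exact absurd rfl hX

theorem extendByZero_eq_zero_of_card_ne {h : G.indepFace k → ℝ} {X : Finset α} (hX : #X ≠ k) :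
    G.extendByZero h X = 0 :=
  dif_neg fun hface => hX hface.1

-- `[DecidableEq α]` makes the `Fintype (G.indepFace k)` instance the one used by `indepBoundary`.
theorem sum_extendByZero [Fintype α] [DecidableEq α] (h : G.indepFace k → ℝ)
    (f : Finset α → ℝ → ℝ) (hf : ∀ X, f X 0 = 0) :
    ∑ X, f X (G.extendByZero h X) = ∑ τ : G.indepFace k, f τ.1 (h τ) := by
  rw [← Fintype.sum_subtype_add_sum_subtype
    (fun X : Finset α => X.card = k ∧ ∀ u ∈ X, ∀ v ∈ X, ¬G.Adj u v)]
  have hzero : ∑ X : {X : Finset α // ¬(X.card = k ∧ ∀ u ∈ X, ∀ v ∈ X, ¬G.Adj u v)},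
      f X (G.extendByZero h X) = 0 :=
    Fintype.sum_eq_zero _ fun X => by rw [extendByZero, dif_neg X.2, hf]
  rw [hzero, add_zero]
  exact Fintype.sum_congr _ _ fun τ => by rw [extendByZero, dif_pos τ.2]

end ExtendByZero

variable {G : SimpleGraph V} [DecidableRel G.Adj] {k : ℕ} {lam : ℝ}

theorem sum_boundaryTerm_extendByZero (h : G.indepFace (k + 1) → ℝ) (σ : Finset V) :
    ∑ v, boundaryTerm (G.extendByZero h) σ v = G.extendByZero (G.indepBoundary k *ᵥ h) σ := by
  by_cases hσ : #σ = k ∧ ∀ u ∈ σ, ∀ v ∈ σ, ¬G.Adj u v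
  · rw [extendByZero, dif_pos hσ, sum_apply_boundaryTerm _ σ (fun _ t => t) fun _ => rfl]
    calc ∑ v ∈ σᶜ, (insert v σ).orderSign v * G.extendByZero h (insert v σ)
        = ∑ X, ∑ v ∈ σᶜ, if insert v σ = X then X.orderSign v * G.extendByZero h X else 0 := by
          rw [sum_comm]
          exact sum_congr rfl fun v _ => by rw [sum_ite_eq, if_pos (mem_univ _)]
      _ = ∑ X, (if σ ⊆ X then ∑ w ∈ X \ σ, X.orderSign w else 0) * G.extendByZero h X := by
          refine sum_congr rfl fun X _ => ?_
          by_cases hX : #X = k + 1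
          · rw [ite_subset_sum_sdiff_orderSign_eq (by rw [hX, hσ.1]), sum_mul]
            simp only [ite_mul, zero_mul]
          · simp [extendByZero_eq_zero_of_card_ne hX]
      _ = ∑ τ, G.indepBoundary k ⟨σ, hσ⟩ τ * h τ := sum_extendByZero h
          (fun X t => (if σ ⊆ X then ∑ w ∈ X \ σ, X.orderSign w else 0) * t) fun _ => mul_zero _
  · rw [extendByZero, dif_neg hσ]
    refine sum_eq_zero fun v _ => ?_
    rw [boundaryTerm]
    split_ifs with hv
    · rfl
    by_contra hne
    obtain ⟨hcard, hind⟩ :=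
      card_eq_and_isIndepSet_of_extendByZero_ne_zero (right_ne_zero_of_mul hne)
    rw [card_insert_of_notMem hv] at hcard
    exact hσ ⟨by omega, fun a ha b hb =>
      isIndepSet_iff_forall_not_adj.mp hind a (by simp [ha]) b (by simp [hb])⟩

theorem coboundary_extendByZero (h : G.indepFace (k + 1) → ℝ) {τ : Finset V}
    (hτ : G.IsIndepSet (τ : Set V)) :
    coboundary (G.extendByZero h) τ = G.extendByZero ((G.indepBoundary (k + 1))ᵀ *ᵥ h) τ := by
  by_cases hcard : #τ = k + 2
  · have hface : #τ = k + 2 ∧ ∀ u ∈ τ, ∀ v ∈ τ, ¬G.Adj u v :=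
      ⟨hcard, isIndepSet_iff_forall_not_adj.mp hτ⟩
    rw [extendByZero, dif_pos hface]
    symm
    calc ((G.indepBoundary (k + 1))ᵀ *ᵥ h) ⟨τ, hface⟩
          = ∑ σ, G.indepBoundary (k + 1) σ ⟨τ, hface⟩ * h σ := rfl
      _ = ∑ Y, (if Y ⊆ τ then ∑ v ∈ τ \ Y, τ.orderSign v else 0) * G.extendByZero h Y :=
          (sum_extendByZero h (fun Y t => (if Y ⊆ τ then ∑ v ∈ τ \ Y, τ.orderSign v else 0) * t)
            fun _ => mul_zero _).symm
      _ = ∑ Y, ∑ v ∈ Yᶜ, if insert v Y = τ then τ.orderSign v * G.extendByZero h Y else 0 := by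
          refine sum_congr rfl fun Y _ => ?_
          by_cases hY : #Y = k + 1
          · rw [ite_subset_sum_sdiff_orderSign_eq (by rw [hY, hcard]), sum_mul]
            simp only [ite_mul, zero_mul]
          · simp [extendByZero_eq_zero_of_card_ne hY]
      _ = ∑ Y, ∑ v ∈ Yᶜ, if insert v Y = τ then
            (insert v Y).orderSign v * G.extendByZero h ((insert v Y).erase v) else 0 := by
          refine sum_congr rfl fun Y _ => sum_congr rfl fun v hv => ?_
          split_ifs with heq
          · rw [heq.symm, erase_insert (mem_compl.mp hv)]
          · rfl
      _ = ∑ X, ∑ v ∈ X, if X = τ then X.orderSign v * G.extendByZero h (X.erase v) else 0 :=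
          (sum_sum_mem_eq_sum_sum_compl fun X v =>
            if X = τ then X.orderSign v * G.extendByZero h (X.erase v) else 0).symm
      _ = coboundary (G.extendByZero h) τ := by
          simp only [sum_ite_irrel, sum_const_zero, sum_ite_eq', mem_univ, if_true, coboundary]
  · rw [extendByZero, dif_neg fun hface => hcard hface.1]
    refine sum_eq_zero fun v hv => ?_
    have := card_pos.mpr ⟨v, hv⟩
    rw [extendByZero_eq_zero_of_card_ne (by rw [card_erase_of_mem hv]; omega), mul_zero]

theorem mul_dotProduct_self_le_indepBoundary
    (hlam : ∀ μ ∈ spectrum ℝ (G.lapMatrix ℝ), μ ≤ lam) (h : G.indepFace (k + 1) → ℝ) :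
    (Fintype.card V - (k + 1) * lam) * (h ⬝ᵥ h)
      ≤ (G.indepBoundary k *ᵥ h) ⬝ᵥ (G.indepBoundary k *ᵥ h)
        + ((G.indepBoundary (k + 1))ᵀ *ᵥ h) ⬝ᵥ ((G.indepBoundary (k + 1))ᵀ *ᵥ h) := by
  have key := sum_mul_sq_le_sum_sq_coboundary_add_sum_sq_boundary (G.extendByZero h) G hlam
    fun X hX => (card_eq_and_isIndepSet_of_extendByZero_ne_zero hX).2
  have hnorm : ∑ X, (Fintype.card V - lam * #X) * G.extendByZero h X ^ 2
      = (Fintype.card V - (k + 1) * lam) * (h ⬝ᵥ h) := by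
    rw [sum_extendByZero h (fun X t => (Fintype.card V - lam * #X) * t ^ 2) (by simp),
      dotProduct, mul_sum]
    refine sum_congr rfl fun τ _ => ?_
    rw [τ.2.1]
    push_cast
    ring
  have hboundary : ∑ σ, (∑ v, boundaryTerm (G.extendByZero h) σ v) ^ 2
      = (G.indepBoundary k *ᵥ h) ⬝ᵥ (G.indepBoundary k *ᵥ h) := by
    simp only [sum_boundaryTerm_extendByZero]
    rw [sum_extendByZero _ (fun _ t => t ^ 2) (by simp), dotProduct]
    simp only [sq]
  have hcoboundary : ∑ τ with G.IsIndepSet ↑(τ : Finset V), coboundary (G.extendByZero h) τ ^ 2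
      = ((G.indepBoundary (k + 1))ᵀ *ᵥ h) ⬝ᵥ ((G.indepBoundary (k + 1))ᵀ *ᵥ h) := by
    rw [sum_congr rfl fun τ hτ => by rw [coboundary_extendByZero h (mem_filter.mp hτ).2],
      sum_filter_of_ne fun τ _ hne =>
        (card_eq_and_isIndepSet_of_extendByZero_ne_zero (pow_ne_zero_iff two_ne_zero |>.mp hne)).2,
      sum_extendByZero _ (fun _ t => t ^ 2) (by simp), dotProduct]
    simp only [sq]
  linarith

theorem disjoint_ker_indepBoundary (hlam : ∀ μ ∈ spectrum ℝ (G.lapMatrix ℝ), μ ≤ lam)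
    (hk : ((k : ℝ) + 1) * lam < Fintype.card V) :
    Disjoint (LinearMap.ker (G.indepBoundary k).mulVecLin)
      (LinearMap.ker (G.indepBoundary (k + 1))ᵀ.mulVecLin) := by
  refine Submodule.disjoint_def.mpr fun h h₁ h₂ => ?_
  rw [LinearMap.mem_ker, mulVecLin_apply] at h₁ h₂
  have hbound := mul_dotProduct_self_le_indepBoundary hlam h
  simp only [h₁, h₂, zero_dotProduct, add_zero] at hbound
  have hnonneg : 0 ≤ h ⬝ᵥ h := sum_nonneg fun τ _ => mul_self_nonneg (h τ)
  exact dotProduct_self_eq_zero.mp (by nlinarith)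

theorem indepHomologyDim_eq_zero_of_mul_lt (hlam : ∀ μ ∈ spectrum ℝ (G.lapMatrix ℝ), μ ≤ lam)
    (hk : ((k : ℝ) + 1) * lam < Fintype.card V) : G.indepHomologyDim k = 0 :=
  Nat.sub_eq_zero_of_le
    (Matrix.finrank_ker_le_finrank_range _ _ (disjoint_ker_indepBoundary hlam hk))

end SimpleGraph

theorem indep_connectivity_lapMax_general {n : ℕ} (G : SimpleGraph (Fin n)) [DecidableRel G.Adj]
    (lamMax : ℝ)
    (hmax : ∀ μ ∈ spectrum ℝ (G.lapMatrix ℝ), μ ≤ lamMax) :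
    ∀ i : ℕ, (i : ℝ) + 1 < n / lamMax → G.indepHomologyDim i = 0 := by
  intro i hi
  have hlam : 0 < lamMax := by
    by_contra hle
    have : (n : ℝ) / lamMax ≤ 0 := div_nonpos_of_nonneg_of_nonpos n.cast_nonneg (not_lt.mp hle)
    linarith [(i.cast_nonneg : (0 : ℝ) ≤ i)]
  have hk : ((i : ℝ) + 1) * lamMax < Fintype.card (Fin n) := by
    rw [Fintype.card_fin]
    exact (lt_div_iff₀ hlam).mp hi
  exact G.indepHomologyDim_eq_zero_of_mul_lt hmax hk

/-- **Aharoni–Berger–Meshulam.** Let `G` be a graph on `n` vertices with at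
least one edge, and `lamMax` the largest eigenvalue of its Laplacian `L(G)`. Then the
homological connectivity of the independence complex satisfies `η(I(G)) ≥ n / lamMax`;
that is, `H̃_i(I(G); ℝ) = 0` for all `i` with `i + 1 < n / lamMax` (equivalently, for all
`i ≤ ⌈n / lamMax⌉ - 2`). -/
theorem indep_connectivity_lapMax {n : ℕ} (G : SimpleGraph (Fin n)) [DecidableRel G.Adj]
    (hE : ∃ u v, G.Adj u v) (lamMax : ℝ)
    (hmem : lamMax ∈ spectrum ℝ (G.lapMatrix ℝ))
    (hmax : ∀ μ ∈ spectrum ℝ (G.lapMatrix ℝ), μ ≤ lamMax) :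
    ∀ i : ℕ, (i : ℝ) + 1 < n / lamMax → G.indepHomologyDim i = 0 :=
  indep_connectivity_lapMax_general G lamMax hmax
end

section
/- Let $G=(V,E)$ be a finite graph and $f:V\to\mathbb{R}_{\ge0}$ a fractional quadratic packing, i.e., $\sum_{u\in N_G(v)}f(u)(f(u)+f(v))\le 1$ for all $v\in V$. Let $w(v)=f(v)^2$ and let $\mathcal{L}^w(G)$ be the symmetric weighted Laplacian with $\mathcal{L}^w(G)_{u,u}=\sum_{u'\in N_G(u)}w(u')$ and $\mathcal{L}^w(G)_{u,v}=-\sqrt{w(u)w(v)}$ for $\{u,v\}\in E$. Then the largest eigenvalue of $\mathcal{L}^w(G)$ is at most $1$. -/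
open Matrix

/-- The symmetric vertex-weighted Laplacian `𝓛^w(G)`. -/
noncomputable def SimpleGraph.symWLap {V : Type*} [Fintype V] [DecidableEq V]
    (G : SimpleGraph V) [DecidableRel G.Adj] (w : V → ℝ) : Matrix V V ℝ :=
  Matrix.of fun u v =>
    if u = v then ∑ u' ∈ G.neighborFinset u, w u'
    else if G.Adj u v then -Real.sqrt (w u * w v) else 0

/-!
By Gershgorin's circle theorem every eigenvalue `μ` of `𝓛^w(G)` satisfies, for some vertex `u`,
`μ ≤ 𝓛_{uu} + ∑_{v ≠ u} |𝓛_{uv}| = ∑_{v ∈ N(u)} (f v ^ 2 + f u * f v)`,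
and the right-hand side is exactly the packing sum at `u`, hence at most `1`.
-/

open Finset

theorem Matrix.exists_le_diag_add_sum_abs_of_mem_spectrum {n : Type*} [Fintype n]
    [DecidableEq n] {A : Matrix n n ℝ} {μ : ℝ} (hμ : μ ∈ spectrum ℝ A) :
    ∃ k, μ ≤ A k k + ∑ j ∈ univ.erase k, |A k j| := by
  have hμ' : Module.End.HasEigenvalue (Matrix.toLin' A) μ := by
    rwa [Module.End.hasEigenvalue_iff_mem_spectrum, Matrix.spectrum_toLin']
  obtain ⟨k, hk⟩ := eigenvalue_mem_ball hμ'
  simp only [Metric.mem_closedBall, Real.dist_eq, Real.norm_eq_abs] at hk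
  exact ⟨k, by linarith [le_abs_self (μ - A k k)]⟩

namespace SimpleGraph

variable {V : Type*} [Fintype V] [DecidableEq V] (G : SimpleGraph V) [DecidableRel G.Adj]
  (w : V → ℝ)

theorem symWLap_apply_self (u : V) : G.symWLap w u u = ∑ v ∈ G.neighborFinset u, w v := by
  simp [symWLap]

theorem sum_erase_abs_symWLap (u : V) :
    ∑ v ∈ univ.erase u, |G.symWLap w u v| = ∑ v ∈ G.neighborFinset u, √(w u * w v) := by
  have hN : G.neighborFinset u = (univ.erase u).filter (G.Adj u) := by
    ext v
    simpa using fun h : G.Adj u v => h.ne'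
  rw [hN, sum_filter]
  refine sum_congr rfl fun v hv => ?_
  have huv : u ≠ v := (ne_of_mem_erase hv).symm
  split_ifs with h <;> simp [symWLap, huv, h]

end SimpleGraph

/-- Let `f : V → ℝ≥0` be a fractional quadratic packing of `G`, i.e.
`∑_{u ∈ N_G(v)} f u * (f u + f v) ≤ 1` for all `v`. Let `w v = (f v)^2`. Then the largest
eigenvalue of the symmetric weighted Laplacian `𝓛^w(G)` is at most `1`. -/
theorem symWLap_eig_le_one {V : Type*} [Fintype V] [DecidableEq V]
    (G : SimpleGraph V) [DecidableRel G.Adj] (f : V → ℝ) (hf : ∀ v, 0 ≤ f v)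
    (hpack : ∀ v, ∑ u ∈ G.neighborFinset v, f u * (f u + f v) ≤ 1) :
    ∀ μ ∈ spectrum ℝ (G.symWLap fun v => (f v) ^ 2), μ ≤ 1 := by
  intro μ hμ
  obtain ⟨k, hk⟩ := Matrix.exists_le_diag_add_sum_abs_of_mem_spectrum hμ
  rw [G.symWLap_apply_self, G.sum_erase_abs_symWLap, ← sum_add_distrib] at hk
  refine hk.trans (le_of_eq_of_le (sum_congr rfl fun v _ => ?_) (hpack k))
  rw [← mul_pow, Real.sqrt_sq (mul_nonneg (hf k) (hf v))]
  ring
end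

section
/- For the cycle graph $C_n$ on vertex set $\{1,\ldots,n\}$, define $f(i)=0$ if $i\equiv1\pmod 3$ and $f(i)=1/\sqrt2$ otherwise. Then $f$ is a fractional quadratic packing of $C_n$ (i.e., $\sum_{u\in N(v)}f(u)(f(u)+f(v))\le1$ for all $v$), and $\sum_{i=1}^n f(i)^2$ equals $k$ if $n=3k$ or $n=3k+1$, and $k+1/2$ if $n=3k+2$. -/
/-!
Vertex `j : Fin n` is the paper's vertex `j + 1`, so the zeros of `f` sit at `j ≡ 0 (mod 3)`.
On the cycle, among three consecutive vertices `v - 1, v, v + 1` one carries the value `0`.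
Since `f u ^ 2 ≤ 1 / 2` everywhere, the two terms at `v` then sum to at most
`f(v-1) ^ 2 + f(v+1) ^ 2 ≤ 1` (if `f v = 0`) or to a single term `f u ^ 2 + f u * f v ≤ 1`.
The sum of squares adds `1 / 2` for each vertex index not divisible by `3`.
-/

open Finset

lemma mul_add_add_mul_add_le_one {a x b : ℝ} (ha : a ^ 2 ≤ 1 / 2) (hx : x ^ 2 ≤ 1 / 2)
    (hb : b ^ 2 ≤ 1 / 2) (hzero : a = 0 ∨ x = 0 ∨ b = 0) :
    a * (a + x) + b * (b + x) ≤ 1 := by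
  have := sq_nonneg (a - x)
  have := sq_nonneg (b - x)
  rcases hzero with rfl | rfl | rfl <;> nlinarith

lemma Fin.val_sub_one_or_val_or_val_add_one_mod_three {n : ℕ} (v : Fin (n + 1)) :
    (v - 1 : Fin (n + 1)).val % 3 = 0 ∨ v.val % 3 = 0 ∨ (v + 1 : Fin (n + 1)).val % 3 = 0 := by
  rw [Fin.coe_sub_one, Fin.val_add_one]
  split_ifs with h0 hl hl
  · simp [h0]
  · simp [h0]
  · simp
  · have : v.val ≠ 0 := Fin.val_ne_zero_iff.mpr h0
    omega

lemma sum_range_three_mul_ite_mod_three (k : ℕ) :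
    ∑ j ∈ range (3 * k), (if j % 3 = 0 then 0 else 1 / 2 : ℝ) = k := by
  induction k with
  | zero => simp
  | succ k ih =>
    rw [show 3 * (k + 1) = 3 * k + 1 + 1 + 1 by ring, sum_range_succ, sum_range_succ,
      sum_range_succ, ih]
    simp [Nat.add_mod]
    ring

/-- On the cycle graph `C_n` (`n ≥ 3`; vertices `0, …, n-1`, corresponding to
`1, …, n`), define `f j = 0` if `j ≡ 0 (mod 3)` (i.e. the vertex label in `{1, …, n}` is
`≡ 1 (mod 3)`) and `f j = 1/√2` otherwise. Then `f` is a fractional quadratic packing of `C_n`,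
and `∑_j (f j)^2` equals `k` if `n = 3k` or `n = 3k + 1`, and `k + 1/2` if `n = 3k + 2`. -/
theorem cycle_quadratic_packing {n : ℕ} (hn : 3 ≤ n)
    (f : Fin n → ℝ)
    (hfdef : ∀ j : Fin n, f j = if (j : ℕ) % 3 = 0 then 0 else 1 / Real.sqrt 2) :
    (∀ v : Fin n, ∑ u ∈ (SimpleGraph.cycleGraph n).neighborFinset v,
        f u * (f u + f v) ≤ 1) ∧
    (∀ k : ℕ, ((n = 3 * k ∨ n = 3 * k + 1) → ∑ j : Fin n, (f j) ^ 2 = k) ∧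
      (n = 3 * k + 2 → ∑ j : Fin n, (f j) ^ 2 = k + 1 / 2)) := by
  have hsq (j : Fin n) : f j ^ 2 = if (j : ℕ) % 3 = 0 then 0 else 1 / 2 := by
    rw [hfdef j]
    split_ifs <;> simp
  have hsq_le (j : Fin n) : f j ^ 2 ≤ 1 / 2 := by
    rw [hsq j]
    split_ifs <;> norm_num
  have hsum : ∑ j : Fin n, f j ^ 2 = ∑ j ∈ range n, (if j % 3 = 0 then 0 else 1 / 2 : ℝ) :=
    (sum_congr rfl fun j _ => hsq j).trans (Fin.sum_univ_eq_sum_range (fun j => if j % 3 = 0 then 0 else 1 / 2) n)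
  refine ⟨fun v => ?_, fun k => ⟨?_, ?_⟩⟩
  · obtain ⟨m, rfl⟩ : ∃ m, n = m + 3 := ⟨n - 3, by omega⟩
    have hne : v - 1 ≠ v + 1 := card_pair_eq_two_iff.mp <|
      SimpleGraph.cycleGraph_degree_two_le.symm.trans SimpleGraph.cycleGraph_degree_three_le
    rw [SimpleGraph.cycleGraph_neighborFinset, sum_pair hne]
    apply mul_add_add_mul_add_le_one (hsq_le _) (hsq_le _) (hsq_le _)
    rcases Fin.val_sub_one_or_val_or_val_add_one_mod_three v with h | h | h <;>
      simp [hfdef, h]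
  · rintro (rfl | rfl)
    · rw [hsum, sum_range_three_mul_ite_mod_three]
    · rw [hsum, sum_range_succ, sum_range_three_mul_ite_mod_three]
      simp
  · rintro rfl
    rw [hsum, sum_range_succ, sum_range_succ, sum_range_three_mul_ite_mod_three]
    simp [Nat.add_mod]
end

section
/- Let $M\in\mathbb{C}^{n\times n}$ be Hermitian and $1\le k\le n$. Then the sum of the $k$ largest eigenvalues of $M$ is at most $\max_{\sigma}\big(\sum_{i\in\sigma}M_{i,i}+\sum_{i\in\sigma, j\notin\sigma}|M_{i,j}|\big)$, where the maximum is over all $k$-element subsets $\sigma$ of $\{1,\ldots,n\}$. -/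
/-!
If `M * W = W * B` with `W : Matrix m κ _`, the maximal minors `d r = det (W.submatrix r id)`,
indexed by row selections `r : κ → m`, satisfy
`trace B * d r = ∑ a, ∑ l, M (r a) l * d (update r a l)`: they form an eigenvector of the
additive compound of `M`. Running Gershgorin's argument at a selection `r` maximising `‖d r‖`
(injective, with image `σ`; the terms with `l ∈ σ` other than `l = r a` vanish because two rows
repeat) gives `‖trace B - ∑ i ∈ σ, M i i‖ ≤ ∑ i ∈ σ, ∑ j ∉ σ, ‖M i j‖`. For Hermitian `M` take
for the columns of `W` orthonormal eigenvectors of the chosen eigenvalues: then `Wᴴ * W = 1`, and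
since `det (Wᴴ * W)` is a combination of the maximal minors of `W`, one of them is nonzero.
-/

open Matrix Polynomial Finset Function

theorem exists_equiv_of_map_univ_val_eq {α β γ : Type*} [Fintype α] [Fintype β] [DecidableEq γ]
    {f : α → γ} {g : β → γ} (h : univ.val.map f = univ.val.map g) :
    ∃ e : α ≃ β, ∀ a, g (e a) = f a := by
  refine ⟨Equiv.ofFiberEquiv fun c => Fintype.equivOfCardEq ?_, Equiv.ofFiberEquiv_map _⟩
  classical
  simpa [Fintype.card_subtype, Multiset.count_map, eq_comm, card_def] using
    congr_arg (Multiset.count c) h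

namespace Matrix

variable {R : Type*} [CommRing R] {m κ : Type*} [Fintype κ] [DecidableEq κ]

theorem det_updateRow_eq_vecMul_adjugate (A : Matrix κ κ R) (a : κ) (v : κ → R) :
    (A.updateRow a v).det = (v ᵥ* A.adjugate) a := by
  rw [← cramer_transpose_apply, cramer_eq_adjugate_mulVec, ← adjugate_transpose, mulVec_transpose]

theorem trace_mul_det_submatrix_eq_sum [Fintype m] [DecidableEq m] {M : Matrix m m R}
    {W : Matrix m κ R} {B : Matrix κ κ R} (hW : M * W = W * B) (r : κ → m) :
    B.trace * (W.submatrix r id).det =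
      ∑ a, ∑ l, M (r a) l * (W.submatrix (update r a l) id).det := by
  set A := W.submatrix r id
  have hrow : ∀ a l, W.submatrix (update r a l) id = A.updateRow a (W l) := by
    intro a l
    ext b j
    rcases eq_or_ne b a with rfl | h <;> simp [*, A]
  calc B.trace * A.det = (A * B * A.adjugate).trace := by
        rw [trace_mul_comm, ← Matrix.mul_assoc, adjugate_mul, smul_mul, Matrix.one_mul, trace_smul,
          smul_eq_mul, mul_comm]
    _ = ∑ a, (M * (W * A.adjugate)) (r a) a := by
        rw [← Matrix.mul_assoc, hW]
        rfl
    _ = _ := by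
        simp only [hrow, det_updateRow_eq_vecMul_adjugate, mul_apply, vecMul, dotProduct]

theorem det_mul_eq_sum_prod_mul_det_submatrix [Fintype m] (A : Matrix κ m R) (B : Matrix m κ R) :
    (A * B).det = ∑ r : κ → m, (∏ a, A a (r a)) * (B.submatrix r id).det := by
  have hrows : A * B = of fun a => ∑ l, A a l • B l := by
    ext a b
    simp [mul_apply, Finset.sum_apply]
  rw [det, hrows]
  refine (detRowAlternating.toMultilinearMap.map_sum _).trans (sum_congr rfl fun r _ => ?_)
  simp only [MultilinearMap.map_smul_univ, smul_eq_mul]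
  rfl

theorem exists_det_submatrix_ne_zero_of_det_mul_ne_zero [Fintype m] (A : Matrix κ m R)
    (B : Matrix m κ R) (h : (A * B).det ≠ 0) : ∃ r : κ → m, (B.submatrix r id).det ≠ 0 := by
  rw [det_mul_eq_sum_prod_mul_det_submatrix] at h
  obtain ⟨r, -, hr⟩ := exists_ne_zero_of_sum_ne_zero h
  exact ⟨r, right_ne_zero_of_mul hr⟩

theorem sum_mul_det_submatrix_update_eq [Fintype m] [DecidableEq m] (W : Matrix m κ R)
    {r : κ → m} (hr : Injective r) (x : m → R) (a : κ) :
    ∑ l, x l * (W.submatrix (update r a l) id).det =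
      x (r a) * (W.submatrix r id).det +
        ∑ l ∈ (univ.image r)ᶜ, x l * (W.submatrix (update r a l) id).det := by
  rw [← sum_add_sum_compl (univ.image r), sum_image hr.injOn, sum_eq_single a]
  · rw [update_eq_self]
  · intro b _ hba
    rw [det_zero_of_row_eq hba.symm (funext fun j => by simp [update_of_ne hba]), mul_zero]
  · simp

theorem exists_norm_trace_sub_sum_diag_le {𝕜 : Type*} [NormedField 𝕜] [Fintype m] [DecidableEq m]
    {M : Matrix m m 𝕜} {W : Matrix m κ 𝕜} {B : Matrix κ κ 𝕜} (hW : M * W = W * B)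
    (hne : ∃ r : κ → m, (W.submatrix r id).det ≠ 0) :
    ∃ σ : Finset m, #σ = Fintype.card κ ∧
      ‖B.trace - ∑ i ∈ σ, M i i‖ ≤ ∑ i ∈ σ, ∑ j ∈ σᶜ, ‖M i j‖ := by
  set d : (κ → m) → 𝕜 := fun r => (W.submatrix r id).det
  obtain ⟨r₁, hr₁⟩ := hne
  have : Nonempty (κ → m) := ⟨r₁⟩
  obtain ⟨r, hmax⟩ := Finite.exists_max fun r => ‖d r‖
  have hr : d r ≠ 0 := fun h => hr₁ (by simpa [h] using hmax r₁)
  have hinj : Injective r := fun a b hab =>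
    by_contra fun h => hr (det_zero_of_row_eq h (funext fun j => by simp [hab]))
  set σ := univ.image r
  refine ⟨σ, card_image_of_injective _ hinj, ?_⟩
  have heq : (B.trace - ∑ a, M (r a) (r a)) * d r =
      ∑ a, ∑ l ∈ σᶜ, M (r a) l * d (update r a l) := by
    rw [sub_mul, trace_mul_det_submatrix_eq_sum hW]
    simp only [d, sum_mul_det_submatrix_update_eq W hinj, sum_add_distrib, sum_mul]
    ring
  have hbound : ‖B.trace - ∑ a, M (r a) (r a)‖ * ‖d r‖ ≤
      (∑ a, ∑ l ∈ σᶜ, ‖M (r a) l‖) * ‖d r‖ := by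
    rw [← norm_mul, heq, sum_mul]
    refine (norm_sum_le _ _).trans (sum_le_sum fun a _ => ?_)
    rw [sum_mul]
    refine (norm_sum_le _ _).trans (sum_le_sum fun l _ => ?_)
    rw [norm_mul]
    gcongr
    exact hmax _
  rw [sum_image hinj.injOn, sum_image hinj.injOn]
  exact le_of_mul_le_mul_right hbound (norm_pos_iff.2 hr)

theorem IsHermitian.exists_sum_eigenvalues_le {𝕜 : Type*} [RCLike 𝕜] {n : Type*} [Fintype n]
    [DecidableEq n] {M : Matrix n n 𝕜} (hM : M.IsHermitian) (S : Finset n) :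
    ∃ σ : Finset n, #σ = #S ∧
      ∑ j ∈ S, hM.eigenvalues j ≤ ∑ i ∈ σ, RCLike.re (M i i) + ∑ i ∈ σ, ∑ j ∈ σᶜ, ‖M i j‖ := by
  set U : Matrix n n 𝕜 := (hM.eigenvectorUnitary : Matrix n n 𝕜)
  set W := U.submatrix id ((↑) : S → n)
  have hMU : M * U = U * diagonal (RCLike.ofReal ∘ hM.eigenvalues) := by
    conv_lhs => rw [hM.spectral_theorem, Unitary.conjStarAlgAut_apply]
    simp [U, Matrix.mul_assoc]
  have hW : M * W = W * diagonal (fun j : S => (hM.eigenvalues j : 𝕜)) := by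
    ext i j
    have := congrFun (congrFun hMU i) j
    rw [mul_diagonal] at this ⊢
    simpa [W, mul_apply] using this
  have hWW : Wᴴ * W = 1 := by
    rw [conjTranspose_submatrix, ← submatrix_mul _ _ _ _ _ bijective_id, ← star_eq_conjTranspose,
      Unitary.star_mul_self_of_mem hM.eigenvectorUnitary.2]
    exact submatrix_one _ Subtype.val_injective
  obtain ⟨σ, hσ, hle⟩ := exists_norm_trace_sub_sum_diag_le hW
    (exists_det_submatrix_ne_zero_of_det_mul_ne_zero Wᴴ W (by simp [hWW]))
  refine ⟨σ, by simpa using hσ, ?_⟩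
  have hre := (RCLike.re_le_norm _).trans hle
  simp only [trace_diagonal, univ_eq_attach, map_sub, map_sum, RCLike.ofReal_re, sum_attach] at hre
  linarith

end Matrix

/-- **Merris.** Let `M` be an `n × n` Hermitian complex matrix with (real)
eigenvalues `μ 0 ≥ μ 1 ≥ ⋯ ≥ μ (n-1)` (with multiplicity). Then for `1 ≤ k ≤ n`, the sum of
the `k` largest eigenvalues of `M` satisfies
`∑_{i < k} μ i ≤ max_{σ, |σ| = k} (∑_{i ∈ σ} M i i + ∑_{i ∈ σ, j ∉ σ} |M i j|)`. -/
theorem merris_gersgorin {n : ℕ} (M : Matrix (Fin n) (Fin n) ℂ) (hM : M.IsHermitian)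
    (k : ℕ) (hkn : k ≤ n)
    (μ : Fin n → ℝ)
    (hc : M.charpoly = ∏ i, (X - C (μ i : ℂ))) :
    ∑ i ∈ Finset.univ.filter (fun i : Fin n => (i : ℕ) < k), μ i ≤
      ((Finset.univ : Finset (Fin n)).powersetCard k).sup'
        (Finset.powersetCard_nonempty.mpr (by simpa using hkn))
        (fun σ => (∑ i ∈ σ, (M i i).re) +
          ∑ i ∈ σ, ∑ j ∈ σᶜ, ‖M i j‖) := by
  obtain ⟨e, he⟩ : ∃ e : Fin n ≃ Fin n, ∀ i, (hM.eigenvalues (e i) : ℂ) = μ i := by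
    refine exists_equiv_of_map_univ_val_eq (f := fun i => (μ i : ℂ))
      (g := fun j => (hM.eigenvalues j : ℂ)) ?_
    have hroots := hM.roots_charpoly_eq_eigenvalues
    rw [hc] at hroots
    rw [← roots_multiset_prod_X_sub_C (univ.val.map fun i => (μ i : ℂ)), Multiset.map_map]
    exact hroots
  set top := univ.filter fun i : Fin n => (i : ℕ) < k
  obtain ⟨σ, hσ, hle⟩ := hM.exists_sum_eigenvalues_le (top.map e.toEmbedding)
  have hcard : #(top.map e.toEmbedding) = k := by simp [top, Fin.card_filter_val_lt, hkn]
  have hsum : ∑ j ∈ top.map e.toEmbedding, hM.eigenvalues j = ∑ i ∈ top, μ i := by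
    simp [sum_map, ← Complex.ofReal_inj, he]
  rw [← hsum]
  exact le_sup'_of_le _ (mem_powersetCard.2 ⟨subset_univ σ, hσ.trans hcard⟩) hle
end

section
/- Let $G=(V,E)$ be a finite graph, $P:V\to\mathbb{R}^\ell$ a vector representation of $G$ (i.e., $P(u)\cdot P(v)\ge1$ if $\{u,v\}\in E$ and $P(u)\cdot P(v)\ge0$ otherwise), and $f:V\to\mathbb{R}_{\ge0}$. Let $\mathcal{L}^f(G)$ be the symmetric weighted Laplacian with diagonal entries $\sum_{u'\in N_G(u)}f(u')$ and off-diagonal entries $-\sqrt{f(u)f(v)}$ on edges. Let $T$ be the diagonal matrix with $T_{u,u}=P(u)\cdot\sum_{v\in V}f(v)P(v)$. Then for all $1\le i\le|V|$, the $i$-th largest eigenvalue of $T$ is at least the $i$-th largest eigenvalue of $\mathcal{L}^f(G)$. -/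
open Matrix Polynomial

/-!
Both matrices are symmetric, so by Weyl monotonicity it suffices that `T - 𝓛^f(G)` is positive
semidefinite. If the `i`-th eigenvalue of `A` exceeded that of `B ≥ A`, the span of the top
`i + 1` eigenvectors of `A` would meet the span of the bottom `n - i` eigenvectors of `B` in a
nonzero `x`, and `xᵀ A x ≤ xᵀ B x` would be violated.

With `p u v = ⟪P u, P v⟫` and `a` the adjacency matrix of `G`,
`xᵀ T x - xᵀ 𝓛^f x = ∑ (p u v - a u v) (f v x_u² - √(f u f v) x_u x_v) + ‖∑ √(f u) x_u P u‖²`.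
The first sum is the quadratic form of a Laplacian with edge weights `p - a ≥ 0`, i.e. half of
`∑ (p u v - a u v) (√(f v) x_u - √(f u) x_v)² ≥ 0`.
-/

open Module Submodule RCLike Finset
open scoped ComplexOrder

namespace OrthonormalBasis

variable {ι 𝕜 E : Type*} [Fintype ι] [RCLike 𝕜] [NormedAddCommGroup E] [InnerProductSpace 𝕜 E]
  (b : OrthonormalBasis ι 𝕜 E)

theorem repr_eq_zero_of_mem_span_image {s : Set ι} {x : E} (hx : x ∈ span 𝕜 (b '' s))
    {k : ι} (hk : k ∉ s) : b.repr x k = 0 := by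
  rw [← b.coe_toBasis, Basis.mem_span_image] at hx
  rw [← b.coe_toBasis_repr_apply]
  exact Finsupp.notMem_support_iff.mp fun h => hk (hx h)

theorem finrank_span_image_s18 (s : Finset ι) : finrank 𝕜 (span 𝕜 (b '' s)) = s.card := by
  rw [Set.image_eq_range]
  exact (finrank_span_eq_card
    (b.orthonormal.linearIndependent.comp _ Subtype.val_injective)).trans (by simp)

end OrthonormalBasis

namespace LinearMap.IsSymmetric

variable {𝕜 E : Type*} [RCLike 𝕜] [NormedAddCommGroup E] [InnerProductSpace 𝕜 E]
  [FiniteDimensional 𝕜 E] {T S : E →ₗ[𝕜] E} {n : ℕ}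

theorem re_inner_apply_self_eq_sum (hT : T.IsSymmetric) (hn : finrank 𝕜 E = n) (x : E) :
    re (inner 𝕜 (T x) x) =
      ∑ k, hT.eigenvalues hn k * ‖(hT.eigenvectorBasis hn).repr x k‖ ^ 2 := by
  rw [← (hT.eigenvectorBasis hn).repr.inner_map_map, PiLp.inner_apply, map_sum]
  refine sum_congr rfl fun k _ => ?_
  rw [eigenvectorBasis_apply_self_apply, ← real_smul_eq_coe_mul, inner_smul_left_eq_smul,
    inner_self_eq_norm_sq_to_K, smul_re, ← ofReal_pow, ofReal_re]

theorem mul_norm_sq_le_re_inner_apply_self (hT : T.IsSymmetric) (hn : finrank 𝕜 E = n)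
    {s : Set (Fin n)} {c : ℝ} (hc : ∀ k ∈ s, c ≤ hT.eigenvalues hn k) {x : E}
    (hx : x ∈ span 𝕜 (hT.eigenvectorBasis hn '' s)) :
    c * ‖x‖ ^ 2 ≤ re (inner 𝕜 (T x) x) := by
  rw [hT.re_inner_apply_self_eq_sum hn, ← (hT.eigenvectorBasis hn).repr.norm_map,
    EuclideanSpace.norm_sq_eq, mul_sum]
  refine sum_le_sum fun k _ => ?_
  by_cases hk : k ∈ s
  · exact mul_le_mul_of_nonneg_right (hc k hk) (sq_nonneg _)
  · simp [(hT.eigenvectorBasis hn).repr_eq_zero_of_mem_span_image hx hk]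

theorem re_inner_apply_self_le_mul_norm_sq (hT : T.IsSymmetric) (hn : finrank 𝕜 E = n)
    {s : Set (Fin n)} {c : ℝ} (hc : ∀ k ∈ s, hT.eigenvalues hn k ≤ c) {x : E}
    (hx : x ∈ span 𝕜 (hT.eigenvectorBasis hn '' s)) :
    re (inner 𝕜 (T x) x) ≤ c * ‖x‖ ^ 2 := by
  rw [hT.re_inner_apply_self_eq_sum hn, ← (hT.eigenvectorBasis hn).repr.norm_map,
    EuclideanSpace.norm_sq_eq, mul_sum]
  refine sum_le_sum fun k _ => ?_
  by_cases hk : k ∈ s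
  · exact mul_le_mul_of_nonneg_right (hc k hk) (sq_nonneg _)
  · simp [(hT.eigenvectorBasis hn).repr_eq_zero_of_mem_span_image hx hk]

theorem eigenvalues_le_of_le (hT : T.IsSymmetric) (hS : S.IsSymmetric) (hn : finrank 𝕜 E = n)
    (hTS : T ≤ S) (i : Fin n) : hT.eigenvalues hn i ≤ hS.eigenvalues hn i := by
  set U := span 𝕜 (hT.eigenvectorBasis hn '' (Finset.Iic i : Set (Fin n)))
  set W := span 𝕜 (hS.eigenvectorBasis hn '' (Finset.Ici i : Set (Fin n)))
  have hUW : ¬ Disjoint U W := by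
    intro hdisj
    have := Submodule.finrank_add_finrank_le_of_disjoint hdisj
    rw [OrthonormalBasis.finrank_span_image_s18, OrthonormalBasis.finrank_span_image_s18,
      Fin.card_Iic, Fin.card_Ici, hn] at this
    omega
  obtain ⟨x, hxU, hxW, hx⟩ : ∃ x ∈ U, x ∈ W ∧ x ≠ 0 := by
    simpa [Submodule.disjoint_def] using hUW
  have hTx := hT.mul_norm_sq_le_re_inner_apply_self hn
    (fun k hk => hT.eigenvalues_antitone hn (mem_Iic.mp hk)) hxU
  have hSx := hS.re_inner_apply_self_le_mul_norm_sq hn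
    (fun k hk => hS.eigenvalues_antitone hn (mem_Ici.mp hk)) hxW
  have hTSx : re (inner 𝕜 (T x) x) ≤ re (inner 𝕜 (S x) x) := by
    simpa [inner_sub_left] using hTS.2 x
  exact le_of_mul_le_mul_right (hTx.trans (hTSx.trans hSx)) (by positivity)

theorem eigenvalues_eq_of_charpoly_eq (hT : T.IsSymmetric) (hn : finrank 𝕜 E = n)
    {ν : Fin n → ℝ} (hν : Antitone ν) (hc : T.charpoly = ∏ i, (X - C (ν i : 𝕜))) :
    hT.eigenvalues hn = ν := by
  rw [← List.ofFn_inj, ← hT.sort_roots_charpoly_eq_eigenvalues hn, hc,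
    roots_prod _ _ (prod_ne_zero_iff.mpr fun i _ => X_sub_C_ne_zero _)]
  simp_rw [roots_X_sub_C, Multiset.bind_singleton, Multiset.map_map, Function.comp_def, ofReal_re,
    Fin.univ_val_map, Multiset.coe_sort]
  exact List.mergeSort_of_pairwise
    (by simpa [List.pairwise_ofFn] using fun i j (h : i < j) => hν h.le)

end LinearMap.IsSymmetric

theorem Matrix.charpoly_toEuclideanLin {𝕜 ι : Type*} [RCLike 𝕜] [Fintype ι] [DecidableEq ι]
    (A : Matrix ι ι 𝕜) : A.toEuclideanLin.charpoly = A.charpoly := by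
  rw [toEuclideanLin_eq_toLin_orthonormal, charpoly_toLin]

theorem Matrix.le_of_posSemidef_sub_of_charpoly_eq {𝕜 : Type*} [RCLike 𝕜] {n : ℕ}
    {A B : Matrix (Fin n) (Fin n) 𝕜} (hA : A.IsHermitian) (hAB : (B - A).PosSemidef)
    {ν μ : Fin n → ℝ} (hν : Antitone ν) (hμ : Antitone μ)
    (hcA : A.charpoly = ∏ i, (X - C (ν i : 𝕜))) (hcB : B.charpoly = ∏ i, (X - C (μ i : 𝕜)))
    (i : Fin n) : ν i ≤ μ i := by
  have hA' : A.toEuclideanLin.IsSymmetric := isSymmetric_toEuclideanLin_iff.mpr hA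
  have hB' : B.toEuclideanLin.IsSymmetric :=
    isSymmetric_toEuclideanLin_iff.mpr (by simpa using hAB.isHermitian.add hA)
  have hle : A.toEuclideanLin ≤ B.toEuclideanLin := by
    rw [LinearMap.le_def, ← map_sub, isPositive_toEuclideanLin_iff]
    exact hAB
  rw [← hA'.eigenvalues_eq_of_charpoly_eq finrank_euclideanSpace_fin hν
      (by rw [charpoly_toEuclideanLin, hcA]),
    ← hB'.eigenvalues_eq_of_charpoly_eq finrank_euclideanSpace_fin hμ
      (by rw [charpoly_toEuclideanLin, hcB])]
  exact hA'.eigenvalues_le_of_le hB' _ hle i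

section WeightedLaplacianForm

variable {V : Type*} [Fintype V]

/-- The quadratic form `x ↦ xᵀ L x` of the symmetric Laplacian with edge weights `c` and vertex
weights `f`. -/
noncomputable def weightedLaplacianForm (c : V → V → ℝ) (f x : V → ℝ) : ℝ :=
  ∑ u, ∑ v, c u v * (f v * x u ^ 2 - √(f u) * √(f v) * (x u * x v))

theorem two_mul_weightedLaplacianForm {c : V → V → ℝ}
    (hc : ∀ u v, c u v = c v u) {f : V → ℝ} (hf : ∀ v, 0 ≤ f v) (x : V → ℝ) :
    2 * weightedLaplacianForm c f x = ∑ u, ∑ v, c u v * (√(f v) * x u - √(f u) * x v) ^ 2 := by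
  have hswap : ∑ u, ∑ v, c u v * (f u * x v ^ 2) = ∑ u, ∑ v, c u v * (f v * x u ^ 2) := by
    rw [sum_comm]
    simp_rw [hc]
  symm
  calc _ = ∑ u, ∑ v, (c u v * (f v * x u ^ 2) + c u v * (f u * x v ^ 2)
        - 2 * (c u v * (√(f u) * √(f v) * (x u * x v)))) := by
        refine sum_congr rfl fun u _ => sum_congr rfl fun v _ => ?_
        linear_combination c u v * x v ^ 2 * Real.sq_sqrt (hf u)
          + c u v * x u ^ 2 * Real.sq_sqrt (hf v)
    _ = _ := by
        simp only [weightedLaplacianForm, sum_sub_distrib, sum_add_distrib, ← mul_sum, hswap,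
          mul_sub]
        ring

theorem weightedLaplacianForm_nonneg {c : V → V → ℝ}
    (hc_symm : ∀ u v, c u v = c v u) (hc : ∀ u v, 0 ≤ c u v) {f : V → ℝ} (hf : ∀ v, 0 ≤ f v)
    (x : V → ℝ) : 0 ≤ weightedLaplacianForm c f x := by
  have hsq : 0 ≤ ∑ u, ∑ v, c u v * (√(f v) * x u - √(f u) * x v) ^ 2 :=
    sum_nonneg fun u _ => sum_nonneg fun v _ => mul_nonneg (hc u v) (sq_nonneg _)
  linarith [two_mul_weightedLaplacianForm hc_symm hf x]

end WeightedLaplacianForm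

namespace SimpleGraph

variable {V : Type*} [Fintype V] [DecidableEq V] (G : SimpleGraph V) [DecidableRel G.Adj]

theorem symWLap_apply (w : V → ℝ) (u v : V) :
    G.symWLap w u v =
      (if u = v then ∑ u' ∈ G.neighborFinset u, w u' else 0)
        - G.adjMatrix ℝ u v * √(w u * w v) := by
  by_cases huv : u = v
  · subst huv; simp [symWLap]
  · by_cases hadj : G.Adj u v <;> simp [symWLap, huv, hadj]

theorem symWLap_isHermitian (w : V → ℝ) : (G.symWLap w).IsHermitian := by
  refine IsHermitian.ext fun u v => ?_
  by_cases huv : u = v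
  · subst huv; rfl
  · simp [symWLap_apply, huv, Ne.symm huv, G.adj_comm, mul_comm (w u)]

theorem dotProduct_symWLap_mulVec {w : V → ℝ} (hw : ∀ v, 0 ≤ w v) (x : V → ℝ) :
    x ⬝ᵥ (G.symWLap w *ᵥ x) = weightedLaplacianForm (G.adjMatrix ℝ) w x := by
  have hdeg : ∀ u, ∑ u' ∈ G.neighborFinset u, w u' = ∑ v, G.adjMatrix ℝ u v * w v := by
    intro u
    rw [← adjMatrix_mulVec_apply]; rfl
  simp only [weightedLaplacianForm, dotProduct, mulVec, symWLap_apply, sub_mul, sum_sub_distrib,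
    ite_mul, zero_mul, sum_ite_eq, mem_univ, if_true, mul_sub, mul_sum, hdeg,
    Real.sqrt_mul (hw _)]
  congr 1 <;> refine sum_congr rfl fun u _ => ?_
  · rw [sum_mul, mul_sum]
    exact sum_congr rfl fun v _ => by ring
  · exact sum_congr rfl fun v _ => by ring

theorem posSemidef_diagonal_sub_symWLap {E : Type*} [NormedAddCommGroup E]
    [InnerProductSpace ℝ E] (P : V → E) (hP1 : ∀ u v, G.Adj u v → 1 ≤ inner ℝ (P u) (P v))
    (hP0 : ∀ u v, ¬ G.Adj u v → 0 ≤ inner ℝ (P u) (P v)) {f : V → ℝ} (hf : ∀ v, 0 ≤ f v) :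
    (diagonal (fun u => inner ℝ (P u) (∑ v, f v • P v)) - G.symWLap f).PosSemidef := by
  refine .of_dotProduct_mulVec_nonneg ((isHermitian_diagonal _).sub (G.symWLap_isHermitian f))
    fun x => ?_
  set p : V → V → ℝ := fun u v => inner ℝ (P u) (P v)
  have hdiag : x ⬝ᵥ (diagonal (fun u => inner ℝ (P u) (∑ v, f v • P v)) *ᵥ x) =
      ∑ u, ∑ v, p u v * (f v * x u ^ 2) := by
    simp only [dotProduct, mulVec_diagonal, inner_sum, real_inner_smul_right, sum_mul, mul_sum]
    exact sum_congr rfl fun u _ => sum_congr rfl fun v _ => by ring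
  have hgram : 0 ≤ ∑ u, ∑ v, p u v * (√(f u) * √(f v) * (x u * x v)) := by
    have := (posSemidef_gram ℝ P).dotProduct_mulVec_nonneg fun u => √(f u) * x u
    simp only [star_trivial, dotProduct, mulVec, gram_apply, mul_sum] at this
    exact this.trans_eq (sum_congr rfl fun u _ => sum_congr rfl fun v _ => by ring)
  have hgap : 0 ≤ weightedLaplacianForm (fun u v => p u v - G.adjMatrix ℝ u v) f x := by
    refine weightedLaplacianForm_nonneg (fun u v => ?_) (fun u v => ?_) hf x
    · simp only [p, real_inner_comm, G.isSymm_adjMatrix.apply]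
    · by_cases hadj : G.Adj u v
      · simpa [hadj] using hP1 u v hadj
      · simpa [hadj] using hP0 u v hadj
  have hsplit : ∑ u, ∑ v, p u v * (f v * x u ^ 2) =
      weightedLaplacianForm (fun u v => p u v - G.adjMatrix ℝ u v) f x
        + weightedLaplacianForm (G.adjMatrix ℝ) f x
        + ∑ u, ∑ v, p u v * (√(f u) * √(f v) * (x u * x v)) := by
    simp only [weightedLaplacianForm, ← sum_add_distrib]
    exact sum_congr rfl fun u _ => sum_congr rfl fun v _ => by ring
  rw [star_trivial, sub_mulVec, dotProduct_sub, sub_nonneg, hdiag, G.dotProduct_symWLap_mulVec hf,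
    hsplit]
  linarith

end SimpleGraph

/-- Let `P : V → ℝ^ℓ` be a vector representation of `G` (`⟪P u, P v⟫ ≥ 1`
on edges, `≥ 0` on non-edges) and `f : V → ℝ≥0`. Let `T` be the diagonal matrix with
`T u u = ⟪P u, ∑_v f v • P v⟫`, and `𝓛^f(G)` the symmetric weighted Laplacian. If
`μ` and `ν` are nonincreasing enumerations of the eigenvalues (with multiplicity) of `T`
and `𝓛^f(G)` respectively, then `μ i ≥ ν i` for every `i`: the `i`-th largest eigenvalue
of `T` is at least the `i`-th largest eigenvalue of `𝓛^f(G)`. -/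
theorem diag_dominates_symWLap {n ℓ : ℕ} (G : SimpleGraph (Fin n)) [DecidableRel G.Adj]
    (P : Fin n → EuclideanSpace ℝ (Fin ℓ))
    (hP1 : ∀ u v, G.Adj u v → (1:ℝ) ≤ (inner ℝ (P u) (P v) : ℝ))
    (hP0 : ∀ u v, ¬ G.Adj u v → (0 : ℝ) ≤ (inner ℝ (P u) (P v) : ℝ))
    (f : Fin n → ℝ) (hf : ∀ v, 0 ≤ f v)
    (T : Matrix (Fin n) (Fin n) ℝ)
    (hT : T = Matrix.diagonal fun u => (inner ℝ (P u) (∑ v : Fin n, f v • P v) : ℝ))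
    (μ ν : Fin n → ℝ) (hμ : Antitone μ) (hν : Antitone ν)
    (hcT : T.charpoly = ∏ i, (X - C (μ i)))
    (hcL : (G.symWLap f).charpoly = ∏ i, (X - C (ν i))) :
    ∀ i : Fin n, ν i ≤ μ i := by
  subst hT
  exact Matrix.le_of_posSemidef_sub_of_charpoly_eq (G.symWLap_isHermitian f)
    (G.posSemidef_diagonal_sub_symWLap P hP1 hP0 hf) hν hμ hcL hcT
end

section
/- Let $G=(V,E)$ be a finite graph, $f:V\to\mathbb{R}_{\ge0}$, and $P:V\to\mathbb{R}^\ell$ a vector representation of $G$ (i.e., $P(u)\cdot P(v)\ge1$ for $\{u,v\}\in E$ and $P(u)\cdot P(v)\ge0$ for $\{u,v\}\notin E$, $u\neq v$). Then for every $x\in\mathbb{R}^V$: $\sum_{\{u,v\}\in E}\big(\sqrt{f(v)}x_u-\sqrt{f(u)}x_v\big)^2 \le \sum_{u\in V}\Big(P(u)\cdot\sum_{v\neq u}f(v)P(v)\Big)x_u^2-\sum_{u\neq v}\sqrt{f(u)f(v)}\,(P(u)\cdot P(v))\,x_u x_v$. Equivalently, the matrix $M-\mathcal{L}^f(G)$ is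 positive semidefinite, where $M_{u,u}=P(u)\cdot\sum_{u'\neq u}f(u')P(u')$ and $M_{u,v}=-\sqrt{f(u)f(v)}P(u)\cdot P(v)$ for $u\neq v$. -/
open Matrix

/-!
For weights `c : V → V → ℝ` let `K c` be the matrix `diag (∑ w, c u w * f w) - (c u v * √(f u) * √(f v))`.
It is linear in `c`, and its quadratic form is `½ ∑ u v, c u v * (√(f v) * x u - √(f u) * x v) ^ 2`,
which is nonnegative when `c ≥ 0` off the diagonal. Now `M = K ⟪P u, P v⟫` and `𝓛^f(G) = K [u ~ v]`,
so `M - 𝓛^f(G) = K (⟪P u, P v⟫ - [u ~ v])`, whose weights are nonnegative off the diagonal exactly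
because `P` is a vector representation. The inequality is this positivity evaluated at `x`, the
edge sum being `xᵀ 𝓛^f(G) x`.
-/

open Finset

namespace Matrix

variable {V R : Type*} [Fintype V]

theorem dotProduct_mulVec_eq_sum_diag_add_sum_offDiag [DecidableEq V] [CommRing R]
    (A : Matrix V V R) (x : V → R) :
    x ⬝ᵥ (A *ᵥ x) = ∑ u, A u u * x u ^ 2 + ∑ u, ∑ v ∈ univ.erase u, A u v * x u * x v := by
  simp only [dotProduct, mulVec, mul_sum, ← sum_add_distrib]
  refine sum_congr rfl fun u _ => ?_
  rw [← add_sum_erase _ _ (mem_univ u)]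
  congr 1
  · ring
  · exact sum_congr rfl fun v _ => by ring

/-- The diagonal terms `c u u` cancel, so only the off-diagonal values of `c` matter. -/
def weightedLaplacian [DecidableEq V] [CommRing R] (c : V → V → R) (g : V → R) :
    Matrix V V R :=
  diagonal (fun u => ∑ w, c u w * g w ^ 2) - of fun u v => c u v * g u * g v

section CommRing

variable [DecidableEq V] [CommRing R] (c c' : V → V → R) (g : V → R)

theorem weightedLaplacian_apply (u v : V) :
    weightedLaplacian c g u v =
      if u = v then ∑ w ∈ univ.erase u, c u w * g w ^ 2 else -(c u v * g u * g v) := by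
  rw [weightedLaplacian, sub_apply, diagonal_apply, of_apply]
  split_ifs with h
  · subst h
    rw [← add_sum_erase _ _ (mem_univ u)]
    ring
  · ring

theorem weightedLaplacian_sub :
    weightedLaplacian (c - c') g = weightedLaplacian c g - weightedLaplacian c' g := by
  ext u v
  simp only [weightedLaplacian_apply, sub_apply, Pi.sub_apply, sub_mul, sum_sub_distrib]
  split_ifs <;> ring

theorem dotProduct_weightedLaplacian_mulVec (x : V → R) :
    x ⬝ᵥ (weightedLaplacian c g *ᵥ x) =
      ∑ u, ∑ v, c u v * (g v ^ 2 * x u ^ 2 - g u * g v * x u * x v) := by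
  rw [weightedLaplacian, sub_mulVec, dotProduct_sub]
  simp only [dotProduct, mulVec_diagonal]
  simp only [mulVec, dotProduct, of_apply, mul_sum, sum_mul, ← sum_sub_distrib]
  exact sum_congr rfl fun u _ => sum_congr rfl fun v _ => by ring

variable {c}

theorem two_mul_dotProduct_weightedLaplacian_mulVec (hc : ∀ u v, c u v = c v u) (x : V → R) :
    2 * (x ⬝ᵥ (weightedLaplacian c g *ᵥ x)) =
      ∑ u, ∑ v, c u v * (g v * x u - g u * x v) ^ 2 := by
  set A : V → V → R := fun u v => c u v * (g v ^ 2 * x u ^ 2 - g u * g v * x u * x v)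
  have hsq : ∀ u v, c u v * (g v * x u - g u * x v) ^ 2 = A u v + A v u := fun u v => by
    simp only [A, hc v u]
    ring
  calc 2 * (x ⬝ᵥ (weightedLaplacian c g *ᵥ x))
      = ∑ u, ∑ v, A u v + ∑ u, ∑ v, A v u := by
        rw [dotProduct_weightedLaplacian_mulVec, two_mul]
        exact congrArg _ sum_comm
    _ = ∑ u, ∑ v, c u v * (g v * x u - g u * x v) ^ 2 := by
        simp only [hsq, sum_add_distrib]

theorem isSymm_weightedLaplacian (hc : ∀ u v, c u v = c v u) : (weightedLaplacian c g).IsSymm := by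
  ext u v
  simp only [transpose_apply, weightedLaplacian_apply, eq_comm (a := v), hc v u]
  split_ifs with h
  · subst h; rfl
  · ring

end CommRing

theorem posSemidef_weightedLaplacian [DecidableEq V] [CommRing R] [LinearOrder R]
    [IsStrictOrderedRing R] [StarRing R] [TrivialStar R] {c : V → V → R} (g : V → R)
    (hc : ∀ u v, c u v = c v u) (hc₀ : ∀ u v, u ≠ v → 0 ≤ c u v) :
    (weightedLaplacian c g).PosSemidef := by
  refine .of_dotProduct_mulVec_nonneg ?_ fun x => ?_
  · rw [IsHermitian, conjTranspose_eq_transpose_of_trivial, isSymm_weightedLaplacian g hc]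
  · have hsum : 0 ≤ 2 * (x ⬝ᵥ (weightedLaplacian c g *ᵥ x)) := by
      rw [two_mul_dotProduct_weightedLaplacian_mulVec g hc]
      refine sum_nonneg fun u _ => sum_nonneg fun v _ => ?_
      rcases eq_or_ne u v with rfl | huv
      · simp
      · exact mul_nonneg (hc₀ u v huv) (sq_nonneg _)
    rw [star_trivial]
    exact nonneg_of_mul_nonneg_right hsum two_pos

end Matrix

namespace SimpleGraph

variable {V : Type*} [Fintype V] (G : SimpleGraph V) [DecidableRel G.Adj]

theorem sum_adj_eq_two_nsmul_sum_edgeFinset {M : Type*} [AddCommMonoid M] (Q : Sym2 V → M) :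
    ∑ u, ∑ v, (if G.Adj u v then Q s(u, v) else 0) = 2 • ∑ e ∈ G.edgeFinset, Q e := by
  classical
  have hdart : ∑ u, ∑ v, (if G.Adj u v then Q s(u, v) else 0) = ∑ d : G.Dart, Q d.edge := by
    rw [← sum_product', ← sum_filter]
    exact sum_bij' (fun p hp => ⟨p, (mem_filter.1 hp).2⟩) (fun d _ => d.toProd)
      (by simp) (by simp) (by simp) (by simp) (by simp [Dart.edge])
  rw [hdart, ← sum_fiberwise_of_maps_to (g := Dart.edge) (t := G.edgeFinset) (by simp), smul_sum]
  refine sum_congr rfl fun e he => ?_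
  rw [sum_congr rfl fun d hd => by rw [(mem_filter.1 hd).2], sum_const]
  rw [← G.dart_edge_fiber_card e (mem_edgeFinset.1 he)]

variable [DecidableEq V] {f : V → ℝ}

theorem symWLap_eq_weightedLaplacian (hf : ∀ v, 0 ≤ f v) :
    G.symWLap f =
      Matrix.weightedLaplacian (fun u v => if G.Adj u v then 1 else 0) (fun v => √(f v)) := by
  ext u v
  rw [Matrix.weightedLaplacian_apply, symWLap, Matrix.of_apply]
  split_ifs with huv hadj
  · rw [sum_erase _ (by simp), neighborFinset_eq_filter, sum_filter]
    exact sum_congr rfl fun w _ => by split_ifs <;> simp [Real.sq_sqrt (hf w)]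
  · rw [Real.sqrt_mul (hf u)]
    ring
  · ring

theorem sum_edgeFinset_eq_dotProduct_symWLap_mulVec (hf : ∀ v, 0 ≤ f v) (x : V → ℝ) :
    ∑ e ∈ G.edgeFinset,
        Sym2.lift ⟨fun u v => (√(f v) * x u - √(f u) * x v) ^ 2, fun u v => by ring⟩ e =
      x ⬝ᵥ (G.symWLap f *ᵥ x) := by
  have hsymm : ∀ u v, (if G.Adj u v then (1 : ℝ) else 0) = if G.Adj v u then 1 else 0 :=
    fun u v => by simp only [G.adj_comm]
  have h := Matrix.two_mul_dotProduct_weightedLaplacian_mulVec (fun v => √(f v)) hsymm x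
  rw [← symWLap_eq_weightedLaplacian G hf] at h
  have hedges := G.sum_adj_eq_two_nsmul_sum_edgeFinset
    (Sym2.lift ⟨fun u v => (√(f v) * x u - √(f u) * x v) ^ 2, fun u v => by ring⟩)
  simp only [ite_mul, one_mul, zero_mul] at h
  simp only [Sym2.lift_mk, nsmul_eq_mul, Nat.cast_ofNat] at hedges
  linarith

end SimpleGraph

/-- Let `P : V → ℝ^ℓ` be a vector representation of `G` and `f : V → ℝ≥0`.
Then for every `x : V → ℝ`,
`∑_{{u,v} ∈ E} (√(f v)·x_u − √(f u)·x_v)² ≤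
  ∑_u ⟪P u, ∑_{v ≠ u} f v • P v⟫ x_u² − ∑_{u ≠ v} √(f u)√(f v) ⟪P u, P v⟫ x_u x_v`;
equivalently, `M − 𝓛^f(G)` is positive semidefinite, where `M u u = ⟪P u, ∑_{u' ≠ u} f u' • P u'⟫`
and `M u v = −√(f u)√(f v) ⟪P u, P v⟫` for `u ≠ v`. -/
theorem quadform_vector_representation {n ℓ : ℕ} (G : SimpleGraph (Fin n))
    [DecidableRel G.Adj]
    (P : Fin n → EuclideanSpace ℝ (Fin ℓ))
    (hP1 : ∀ u v, G.Adj u v → (1 : ℝ) ≤ inner ℝ (P u) (P v))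
    (hP0 : ∀ u v, u ≠ v → ¬ G.Adj u v → (0 : ℝ) ≤ (inner ℝ (P u) (P v) : ℝ))
    (f : Fin n → ℝ) (hf : ∀ v, 0 ≤ f v)
    (M : Matrix (Fin n) (Fin n) ℝ)
    (hM : M = Matrix.of fun u v =>
      if u = v then (inner ℝ (P u) (∑ u' ∈ Finset.univ.erase u, f u' • P u') : ℝ)
      else -(Real.sqrt (f u) * Real.sqrt (f v) * (inner ℝ (P u) (P v) : ℝ))) :
    (∀ x : Fin n → ℝ,
      ∑ e ∈ G.edgeFinset,
        Sym2.lift ⟨fun u v => (Real.sqrt (f v) * x u - Real.sqrt (f u) * x v) ^ 2,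
          fun u v => by ring⟩ e ≤
        (∑ u : Fin n, (inner ℝ (P u) (∑ v ∈ Finset.univ.erase u, f v • P v) : ℝ) * x u ^ 2) -
          ∑ u : Fin n, ∑ v ∈ Finset.univ.erase u,
            Real.sqrt (f u) * Real.sqrt (f v) * (inner ℝ (P u) (P v) : ℝ) * x u * x v) ∧
    (M - G.symWLap f).PosSemidef := by
  set c : Fin n → Fin n → ℝ := fun u v => inner ℝ (P u) (P v)
  have hM' : M = weightedLaplacian c (fun v => √(f v)) := by
    ext u v
    rw [hM, weightedLaplacian_apply, of_apply]
    split_ifs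
    · simp only [c, inner_sum, real_inner_smul_right, Real.sq_sqrt (hf _), mul_comm]
    · ring
  have hpsd : (M - G.symWLap f).PosSemidef := by
    rw [hM', G.symWLap_eq_weightedLaplacian hf, ← weightedLaplacian_sub]
    refine posSemidef_weightedLaplacian _ (fun u v => ?_) (fun u v huv => ?_)
    · simp only [Pi.sub_apply, c, real_inner_comm, G.adj_comm]
    · by_cases hadj : G.Adj u v
      · simpa [c, hadj] using hP1 u v hadj
      · simpa [c, hadj] using hP0 u v huv hadj
  refine ⟨fun x => ?_, hpsd⟩
  have hquad : x ⬝ᵥ (G.symWLap f *ᵥ x) ≤ x ⬝ᵥ (M *ᵥ x) := by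
    simpa only [star_trivial, sub_mulVec, dotProduct_sub, sub_nonneg]
      using hpsd.dotProduct_mulVec_nonneg x
  rw [G.sum_edgeFinset_eq_dotProduct_symWLap_mulVec hf]
  refine hquad.trans_eq ?_
  rw [dotProduct_mulVec_eq_sum_diag_add_sum_offDiag, sub_eq_add_neg, ← sum_neg_distrib]
  congr 1
  · simp [hM]
  · refine sum_congr rfl fun u _ => ?_
    rw [← sum_neg_distrib]
    refine sum_congr rfl fun v hv => ?_
    simp only [hM, of_apply, if_neg (ne_of_mem_erase hv).symm]
    ring
end
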